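/- arXiv:math/0011175 — 7 statements merged into one kernel-verified Lean document; each statement's English description precedes it below -/
import Mathlib

section
/- Let α ≥ 1 be an integer, β ≥ 0 an integer, and γ ∈ {0,1}. Then, in ℚ, det_{1≤i,j≤α}( C(β+j, 2j−i−γ) ) = ∏_{j=1}^{α} [ (β+j)! · (j−1)! · (2β+γ+j+1)_{j−1} ] / [ (2j−1−γ)! · (β+γ+j−1)! ]. -/
open Finset

/-- Binomial coefficient `C(n,k)` with integer lower index, zero when `k < 0` or `k > n`. -/
def ibinom (n k : ℤ) : ℚ :=
  if 0 ≤ k ∧ k ≤ n then (Nat.choose n.toNat k.toNat : ℚ) else 0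

/-- Shifted factorial (Pochhammer) `(a)_n = a(a+1)⋯(a+n-1)`. -/
def poch (a : ℚ) (n : ℕ) : ℚ := ∏ k ∈ Finset.range n, (a + k)

/-!
With `s = β + γ` and `d = 1 - γ` the matrix is the member
`(C(s + d + j, 2j + d - i))_{0 ≤ i,j < n}` of a family indexed by `s d : ℕ`, and deleting
first and last rows and columns stays inside the family: the two diagonal corner minors are
the members `(s, d + 1)` and `(s, d)`, the inner minor is `(s, d + 1)`, and the two
off-diagonal ones are `(s + 1, d - 1)` and `(s - 1, d + 2)`. The Desnanot–Jacobi
identity therefore determines all these determinants from the sizes `0` and `1`, since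
inductively the inner minor is a positive product. The product
formula obeys the same recurrence: neighbouring factors differ by explicit rational functions,
whose products telescope, and the subtracted term carries the factor `s * d`, matching the zero
column (`d = 0`) or the triangular zero-diagonal minor (`s = 0`) in the degenerate cases.
-/

namespace Matrix
variable {R : Type*} [CommRing R]

/-- The Weinstein–Aronszajn identity `det (1 + U V) = det (1 + V U)` reduces this rank-two
perturbation of the identity to a `2 × 2` determinant. -/
theorem det_one_updateCol_updateCol {n : Type*} [Fintype n] [DecidableEq n] {i j : n}
    (hij : i ≠ j) (u v : n → R) :
    (((1 : Matrix n n R).updateCol i u).updateCol j v).det = u i * v j - u j * v i := by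
  let U : Matrix n (Fin 2) R :=
    of fun k => ![u k - if k = i then 1 else 0, v k - if k = j then 1 else 0]
  let V : Matrix (Fin 2) n R :=
    of ![fun l => if l = i then 1 else 0, fun l => if l = j then 1 else 0]
  have hUV : ((1 : Matrix n n R).updateCol i u).updateCol j v = 1 + U * V := by
    ext k l
    simp only [updateCol_apply, add_apply, mul_apply, Fin.sum_univ_two, U, V, of_apply,
      one_apply]
    split_ifs <;> simp_all [eq_comm]
  rw [hUV, det_one_add_mul_comm, det_fin_two]
  simp only [add_apply, one_apply, mul_apply, U, V, of_apply, cons_val_zero, cons_val_one,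
    ite_mul, one_mul, zero_mul, Finset.sum_ite_eq', Finset.mem_univ, if_true, hij, hij.symm,
    if_false, zero_ne_one, one_ne_zero]
  ring

theorem submatrix_updateCol_of_injective {α m₁ m₂ n₁ n₂ : Type*} [DecidableEq n₁]
    [DecidableEq n₂] (A : Matrix m₁ n₁ α) (e : m₂ → m₁) {f : n₂ → n₁}
    (hf : Function.Injective f) (j : n₂) (c : m₁ → α) :
    (A.updateCol (f j) c).submatrix e f = (A.submatrix e f).updateCol j (c ∘ e) := by
  ext a b
  simp only [submatrix_apply, updateCol_apply, hf.eq_iff, Function.comp_apply]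

theorem det_updateCol_single {m : ℕ} (A : Matrix (Fin (m + 1)) (Fin (m + 1)) R)
    (r c : Fin (m + 1)) :
    (A.updateCol c (Pi.single r 1)).det
      = (-1) ^ (r + c : ℕ) * (A.submatrix r.succAbove c.succAbove).det := by
  rw [← det_transpose, ← updateRow_transpose, ← adjugate_apply,
    adjugate_fin_succ_eq_det_submatrix, ← det_transpose, transpose_submatrix,
    transpose_transpose, add_comm]

theorem det_updateCol_single_zero_last {m : ℕ} (A : Matrix (Fin (m + 2)) (Fin (m + 2)) R) :
    ((A.updateCol 0 (Pi.single 0 1)).updateCol (Fin.last _) (Pi.single (Fin.last _) 1)).det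
      = (A.submatrix (Fin.succ ∘ Fin.castSucc) (Fin.succ ∘ Fin.castSucc)).det := by
  have hsingle :
      (Pi.single (Fin.castSucc (0 : Fin (m + 1))) (1 : R)) ∘ Fin.castSucc = Pi.single 0 1 := by
    funext k
    simp [Pi.single_apply]
  rw [det_updateCol_single, Fin.succAbove_last, ← Fin.castSucc_zero,
    submatrix_updateCol_of_injective _ _ (Fin.castSucc_injective _), hsingle,
    det_updateCol_single, Fin.succAbove_zero, submatrix_submatrix]
  simp [← two_mul, Function.comp_def]

theorem mulVec_adjugate_col {n : Type*} [Fintype n] [DecidableEq n] (A : Matrix n n R) (j : n) :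
    (A *ᵥ fun k => A.adjugate k j) = A.det • Pi.single j 1 := by
  funext i
  have := congr_fun₂ (mul_adjugate A) i j
  simp only [mul_apply, smul_apply, one_apply] at this
  simp [mulVec, dotProduct, this, Pi.single_apply]

/-- Multiplying `A` by the identity with columns `0` and `last` taken from `adjugate A` gives
`det A • e₀` and `det A • e_last` in those columns, so its determinant is `det A ^ 2` times
the inner minor. -/
theorem jacobi_adjugate_corners_of_det_ne_zero {S : Type*} [CommRing S] [IsDomain S] {m : ℕ}
    (A : Matrix (Fin (m + 2)) (Fin (m + 2)) S) (hA : A.det ≠ 0) :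
    A.adjugate 0 0 * A.adjugate (Fin.last _) (Fin.last _)
        - A.adjugate (Fin.last _) 0 * A.adjugate 0 (Fin.last _)
      = A.det * (A.submatrix (Fin.succ ∘ Fin.castSucc) (Fin.succ ∘ Fin.castSucc)).det := by
  set l := Fin.last (m + 1)
  have h0l : (0 : Fin (m + 2)) ≠ l := Fin.last_pos.ne
  set T := ((1 : Matrix _ _ S).updateCol 0 fun k => A.adjugate k 0).updateCol l
    fun k => A.adjugate k l
  have hT : T.det = A.adjugate 0 0 * A.adjugate l l - A.adjugate l 0 * A.adjugate 0 l :=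
    det_one_updateCol_updateCol h0l _ _
  have hAT : (A * T).det = A.det * (A.det *
      (A.submatrix (Fin.succ ∘ Fin.castSucc) (Fin.succ ∘ Fin.castSucc)).det) := by
    rw [mul_updateCol, mul_updateCol, mul_one, mulVec_adjugate_col, mulVec_adjugate_col,
      det_updateCol_smul, updateCol_comm _ h0l, det_updateCol_smul, updateCol_comm _ h0l.symm,
      det_updateCol_single_zero_last]
  rw [← hT]
  exact mul_left_cancel₀ hA (by rw [← det_mul, hAT])

/-- Both sides are polynomials in the entries, and the generic matrix has nonzero determinant. -/
theorem jacobi_adjugate_corners {m : ℕ} (A : Matrix (Fin (m + 2)) (Fin (m + 2)) R) :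
    A.adjugate 0 0 * A.adjugate (Fin.last _) (Fin.last _)
        - A.adjugate (Fin.last _) 0 * A.adjugate 0 (Fin.last _)
      = A.det * (A.submatrix (Fin.succ ∘ Fin.castSucc) (Fin.succ ∘ Fin.castSucc)).det := by
  let X := mvPolynomialX (Fin (m + 2)) (Fin (m + 2)) ℤ
  let φ := MvPolynomial.aeval (R := ℤ) fun p : Fin (m + 2) × Fin (m + 2) => A p.1 p.2
  have hX :=
    congrArg φ (jacobi_adjugate_corners_of_det_ne_zero X (det_mvPolynomialX_ne_zero _ ℤ))
  have hA : φ.mapMatrix X = A := mvPolynomialX_mapMatrix_aeval ℤ A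
  have hadj (i j) : φ (X.adjugate i j) = A.adjugate i j := by
    rw [← hA, ← AlgHom.map_adjugate]; rfl
  have hdet {k : ℕ} (e f : Fin k → Fin (m + 2)) :
      φ (X.submatrix e f).det = (A.submatrix e f).det := by
    rw [AlgHom.map_det, ← hA]; rfl
  simpa only [map_sub, map_mul, hadj, AlgHom.map_det, hA, hdet] using hX

theorem desnanot_jacobi {m : ℕ} (A : Matrix (Fin (m + 2)) (Fin (m + 2)) R) :
    A.det * (A.submatrix (Fin.succ ∘ Fin.castSucc) (Fin.succ ∘ Fin.castSucc)).det =
      (A.submatrix Fin.succ Fin.succ).det * (A.submatrix Fin.castSucc Fin.castSucc).det -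
      (A.submatrix Fin.succ Fin.castSucc).det * (A.submatrix Fin.castSucc Fin.succ).det := by
  rw [← jacobi_adjugate_corners]
  simp only [adjugate_fin_succ_eq_det_submatrix, Fin.succAbove_zero, Fin.succAbove_last,
    Fin.val_zero, Fin.val_last]
  have hsq : ((-1 : R) ^ m) ^ 2 = 1 := by rw [← pow_mul, mul_comm, pow_mul]; simp
  linear_combination
    ((A.submatrix Fin.succ Fin.succ).det * (A.submatrix Fin.castSucc Fin.castSucc).det
      - (A.submatrix Fin.succ Fin.castSucc).det * (A.submatrix Fin.castSucc Fin.succ).det) * hsq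

end Matrix

open Nat

theorem poch_succ (a : ℚ) (n : ℕ) : poch a (n + 1) = poch a n * (a + n) :=
  prod_range_succ _ _

theorem mul_poch_add_one (a : ℚ) (n : ℕ) : a * poch (a + 1) n = poch a n * (a + n) := by
  induction n with
  | zero => simp [poch]
  | succ n ih =>
    rw [poch_succ, poch_succ, ← mul_assoc, ih]
    push_cast
    ring

theorem poch_pos {a : ℚ} (ha : 0 < a) (n : ℕ) : 0 < poch a n :=
  prod_pos fun k _ => by positivity

/-- Under `(s, d) = (β + γ, 1 - γ)` and `k = j - 1` this is the `j`-th factor of the product. -/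
def binomDetFactor (s d k : ℕ) : ℚ :=
  (s + d + k)! * k ! * poch (2 * s + d + k + 1 : ℕ) k / ((2 * k + d)! * (s + k)!)

def binomDetProd (n s d : ℕ) : ℚ := ∏ k ∈ range n, binomDetFactor s d k

theorem binomDetFactor_pos (s d k : ℕ) : 0 < binomDetFactor s d k := by
  have := poch_pos (a := ((2 * s + d + k + 1 : ℕ) : ℚ)) (by positivity) k
  unfold binomDetFactor
  positivity

theorem binomDetProd_pos (n s d : ℕ) : 0 < binomDetProd n s d :=
  prod_pos fun k _ => binomDetFactor_pos s d k

theorem binomDetFactor_succ_left (s d k : ℕ) :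
    binomDetFactor (s + 1) d k * (((s + k + 1 : ℕ) : ℚ) * (2 * s + d + k + 2 : ℕ))
      = binomDetFactor s (d + 1) k
        * (((2 * k + d + 1 : ℕ) : ℚ) * (2 * s + d + 2 * k + 2 : ℕ)) := by
  unfold binomDetFactor
  rw [show s + 1 + d + k = s + (d + 1) + k by ring, show s + 1 + k = s + k + 1 by ring,
    show 2 * k + (d + 1) = 2 * k + d + 1 by ring,
    show 2 * (s + 1) + d + k + 1 = 2 * s + (d + 1) + k + 1 + 1 by ring,
    factorial_succ (s + k), factorial_succ (2 * k + d)]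
  have hpoch := mul_poch_add_one ((2 * s + (d + 1) + k + 1 : ℕ) : ℚ) k
  push_cast at hpoch ⊢
  rw [div_mul_eq_mul_div, div_mul_eq_mul_div, div_eq_div_iff (by positivity) (by positivity)]
  linear_combination
    ((s + (d + 1) + k)! * k ! * (2 * k + d + 1) * (2 * k + d)! * (s + k + 1) * (s + k)! : ℚ)
      * hpoch

theorem binomDetFactor_succ (s d k : ℕ) :
    binomDetFactor s d (k + 1) * (((2 * k + d + 2 : ℕ) : ℚ) * (s + k + 1 : ℕ))
      = binomDetFactor s (d + 1) k * (((k + 1 : ℕ) : ℚ) * (2 * s + d + 2 * k + 2 : ℕ)) := by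
  unfold binomDetFactor
  rw [show s + d + (k + 1) = s + (d + 1) + k by ring, show s + (k + 1) = s + k + 1 by ring,
    show 2 * (k + 1) + d = 2 * k + d + 1 + 1 by ring,
    show 2 * s + d + (k + 1) + 1 = 2 * s + (d + 1) + k + 1 by ring,
    show 2 * k + (d + 1) = 2 * k + d + 1 by ring, factorial_succ (s + k),
    factorial_succ (2 * k + d + 1), factorial_succ k, poch_succ]
  push_cast
  rw [div_mul_eq_mul_div, div_mul_eq_mul_div, div_eq_div_iff (by positivity) (by positivity)]
  ring

theorem binomDetProd_succ (n s d : ℕ) :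
    binomDetProd (n + 1) s d = binomDetProd n s d * binomDetFactor s d n :=
  prod_range_succ _ _

theorem binomDetFactor_cross (s d k : ℕ) :
    binomDetFactor (s + 2) d k * binomDetFactor s (d + 3) k
        * (((s + k + 2 : ℕ) : ℚ) * (2 * k + d + 3 : ℕ))
      = binomDetFactor (s + 1) (d + 1) k * binomDetFactor (s + 1) (d + 2) k
        * (((2 * k + d + 1 : ℕ) : ℚ) * (s + k + 1 : ℕ)) := by
  have h₁ := binomDetFactor_succ_left (s + 1) d k
  have h₂ := binomDetFactor_succ_left s (d + 2) k
  rw [show s + 1 + 1 = s + 2 from rfl] at h₁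
  rw [show d + 2 + 1 = d + 3 from rfl] at h₂
  have hpos : (0 : ℚ) < (2 * s + d + k + 4 : ℕ) * (2 * s + d + 2 * k + 4 : ℕ) := by positivity
  refine mul_right_cancel₀ hpos.ne' ?_
  push_cast at h₁ h₂ ⊢
  linear_combination
    (binomDetFactor s (d + 3) k * (2 * k + d + 3 : ℚ) * (2 * s + d + 2 * k + 4)) * h₁
      - (binomDetFactor (s + 1) (d + 1) k * (2 * k + d + 1 : ℚ) * (2 * s + d + 2 * k + 4)) * h₂

theorem binomDetProd_cross (n s d : ℕ) :
    binomDetProd n (s + 2) d * binomDetProd n s (d + 3)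
        * (((2 * n + d + 1 : ℕ) : ℚ) * (s + n + 1 : ℕ))
      = binomDetProd n (s + 1) (d + 1) * binomDetProd n (s + 1) (d + 2)
        * (((d + 1 : ℕ) : ℚ) * (s + 1 : ℕ)) := by
  induction n with
  | zero => simp [binomDetProd]
  | succ n ih =>
    have hk := binomDetFactor_cross s d n
    simp only [binomDetProd_succ]
    push_cast at ih hk ⊢
    linear_combination (binomDetProd n (s + 2) d * binomDetProd n s (d + 3)) * hk
      + (binomDetFactor (s + 1) (d + 1) n * binomDetFactor (s + 1) (d + 2) n) * ih

theorem binomDetProd_succ_succ_mul (n s d : ℕ) :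
    binomDetProd (n + 2) s d * binomDetProd n s (d + 1)
        * (((2 * n + d + 2 : ℕ) : ℚ) * (s + n + 1 : ℕ))
      = binomDetProd (n + 1) s (d + 1) * binomDetProd (n + 1) s d
        * (((n + 1 : ℕ) : ℚ) * (2 * s + d + 2 * n + 2 : ℕ)) := by
  rw [binomDetProd_succ (n + 1) s d, binomDetProd_succ n s (d + 1)]
  linear_combination
    (binomDetProd (n + 1) s d * binomDetProd n s (d + 1)) * binomDetFactor_succ s d n

theorem binomDetProd_condensation (n s d : ℕ) :
    binomDetProd (n + 2) (s + 1) (d + 1) * binomDetProd n (s + 1) (d + 2)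
      = binomDetProd (n + 1) (s + 1) (d + 2) * binomDetProd (n + 1) (s + 1) (d + 1)
        - binomDetProd (n + 1) (s + 2) d * binomDetProd (n + 1) s (d + 3) := by
  have h₁ := binomDetProd_succ_succ_mul n (s + 1) (d + 1)
  have h₂ := binomDetProd_cross (n + 1) s d
  have hc : (0 : ℚ) < (2 * n + d + 3 : ℕ) * (s + n + 2 : ℕ) := by positivity
  refine mul_right_cancel₀ hc.ne' ?_
  push_cast at h₁ h₂ ⊢
  linear_combination h₁ + h₂

theorem binomDetProd_condensation_of_mul_eq_zero {n s d : ℕ} (hsd : s * d = 0) :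
    binomDetProd (n + 2) s d * binomDetProd n s (d + 1)
      = binomDetProd (n + 1) s (d + 1) * binomDetProd (n + 1) s d := by
  have h₁ := binomDetProd_succ_succ_mul n s d
  have hsd' : (s : ℚ) * d = 0 := by exact_mod_cast hsd
  have hc : (0 : ℚ) < (2 * n + d + 2 : ℕ) * (s + n + 1 : ℕ) := by positivity
  refine mul_right_cancel₀ hc.ne' ?_
  push_cast at h₁ ⊢
  linear_combination h₁ - (binomDetProd (n + 1) s (d + 1) * binomDetProd (n + 1) s d) * hsd'

open Matrix

/-- `(s, d) = (β + γ, 1 - γ)` gives the matrix of the theorem, with indices starting at `0`. -/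
def binomMatrix (n s d : ℕ) : Matrix (Fin n) (Fin n) ℚ :=
  of fun i j => ibinom (s + d + j : ℕ) (2 * (j : ℤ) + d - i)

theorem binomMatrix_submatrix_succ_succ (n s d : ℕ) :
    (binomMatrix (n + 1) s d).submatrix Fin.succ Fin.succ = binomMatrix n s (d + 1) := by
  ext i j
  simp only [binomMatrix, submatrix_apply, of_apply, Fin.val_succ]
  congr 1 <;> push_cast <;> ring

theorem binomMatrix_submatrix_castSucc_castSucc (n s d : ℕ) :
    (binomMatrix (n + 1) s d).submatrix Fin.castSucc Fin.castSucc = binomMatrix n s d :=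
  rfl

theorem binomMatrix_submatrix_succ_castSucc (n s d : ℕ) :
    (binomMatrix (n + 1) s (d + 1)).submatrix Fin.succ Fin.castSucc = binomMatrix n (s + 1) d := by
  ext i j
  simp only [binomMatrix, submatrix_apply, of_apply, Fin.val_succ, Fin.val_castSucc]
  congr 1 <;> push_cast <;> ring

theorem binomMatrix_submatrix_castSucc_succ (n s d : ℕ) :
    (binomMatrix (n + 1) (s + 1) d).submatrix Fin.castSucc Fin.succ = binomMatrix n s (d + 2) := by
  ext i j
  simp only [binomMatrix, submatrix_apply, of_apply, Fin.val_succ, Fin.val_castSucc]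
  congr 1 <;> push_cast <;> ring

theorem ibinom_of_neg {n k : ℤ} (hk : k < 0) : ibinom n k = 0 := if_neg (by omega)

theorem ibinom_of_lt {n k : ℤ} (hnk : n < k) : ibinom n k = 0 := if_neg (by omega)

theorem det_binomMatrix_submatrix_succ_castSucc_zero (n s : ℕ) :
    ((binomMatrix (n + 2) s 0).submatrix Fin.succ Fin.castSucc).det = 0 :=
  det_eq_zero_of_column_eq_zero 0 fun i => by
    simp only [binomMatrix, submatrix_apply, of_apply]
    exact ibinom_of_neg (by simp; omega)

theorem det_binomMatrix_submatrix_castSucc_succ_zero (n d : ℕ) :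
    ((binomMatrix (n + 2) 0 d).submatrix Fin.castSucc Fin.succ).det = 0 := by
  have hzero (i j : Fin (n + 1)) (hij : i ≤ j) :
      (binomMatrix (n + 2) 0 d).submatrix Fin.castSucc Fin.succ i j = 0 := by
    simp only [binomMatrix, submatrix_apply, of_apply]
    exact ibinom_of_lt (by rw [Fin.le_def] at hij; simp; omega)
  rw [det_of_isLowerTriangular _ fun i j hij => hzero i j hij.le]
  exact prod_eq_zero (Finset.mem_univ 0) (hzero 0 0 le_rfl)

theorem det_binomMatrix_one (s d : ℕ) : (binomMatrix 1 s d).det = binomDetProd 1 s d := by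
  have hentry : binomMatrix 1 s d 0 0 = (s + d).choose d := by
    rw [binomMatrix, of_apply, ibinom, if_pos (by simp)]
    simp only [Fin.val_zero, Nat.cast_zero, mul_zero, zero_add, sub_zero, add_zero,
      Int.toNat_natCast]
  rw [det_fin_one, hentry, binomDetProd, prod_range_one, binomDetFactor,
    Nat.cast_choose ℚ (Nat.le_add_left d s), Nat.add_sub_cancel]
  simp [poch, mul_comm]

theorem det_binomMatrix (n s d : ℕ) : (binomMatrix n s d).det = binomDetProd n s d := by
  induction n using Nat.twoStepInduction generalizing s d with
  | zero => simp [binomDetProd]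
  | one => exact det_binomMatrix_one s d
  | more n ih₀ ih₁ =>
    have hDJ := desnanot_jacobi (binomMatrix (n + 2) s d)
    rw [← submatrix_submatrix, binomMatrix_submatrix_succ_succ,
      binomMatrix_submatrix_castSucc_castSucc, binomMatrix_submatrix_castSucc_castSucc,
      ih₀, ih₁, ih₁] at hDJ
    refine mul_right_cancel₀ (binomDetProd_pos n s (d + 1)).ne' (hDJ.trans ?_)
    cases s with
    | zero =>
      rw [det_binomMatrix_submatrix_castSucc_succ_zero, mul_zero, sub_zero,
        binomDetProd_condensation_of_mul_eq_zero (zero_mul d)]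
    | succ s =>
      cases d with
      | zero =>
        rw [det_binomMatrix_submatrix_succ_castSucc_zero, zero_mul, sub_zero,
          binomDetProd_condensation_of_mul_eq_zero (mul_zero _)]
      | succ d =>
        rw [binomMatrix_submatrix_succ_castSucc, binomMatrix_submatrix_castSucc_succ, ih₁, ih₁,
          binomDetProd_condensation]

theorem stmt0_general (α β γ : ℕ) (hγ : γ = 0 ∨ γ = 1) :
    (Matrix.of fun i j : Fin α =>
        ibinom ((β : ℤ) + (j.1 + 1)) (2 * ((j.1 : ℤ) + 1) - ((i.1 : ℤ) + 1) - (γ : ℤ))).det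
    = ∏ j ∈ Finset.Icc 1 α,
        ((Nat.factorial (β + j) : ℚ) * (Nat.factorial (j - 1) : ℚ) *
          poch ((2 * β + γ + j + 1 : ℕ) : ℚ) (j - 1)) /
        ((Nat.factorial (2 * j - 1 - γ) : ℚ) * (Nat.factorial (β + γ + j - 1) : ℚ)) := by
  have hmatrix : (Matrix.of fun i j : Fin α =>
      ibinom ((β : ℤ) + (j.1 + 1)) (2 * ((j.1 : ℤ) + 1) - ((i.1 : ℤ) + 1) - (γ : ℤ)))
      = binomMatrix α (β + γ) (1 - γ) := by
    ext i j
    simp only [binomMatrix, of_apply]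
    rcases hγ with rfl | rfl <;> congr 1 <;> push_cast <;> ring
  rw [hmatrix, det_binomMatrix, binomDetProd, ← Ico_add_one_right_eq_Icc, prod_Ico_eq_prod_range,
    Nat.add_sub_cancel]
  refine prod_congr rfl fun k _ => ?_
  obtain ⟨e₁, e₂, e₃, e₄, e₅⟩ : β + γ + (1 - γ) + k = β + (1 + k) ∧
      2 * (β + γ) + (1 - γ) + k + 1 = 2 * β + γ + (1 + k) + 1 ∧
      2 * k + (1 - γ) = 2 * (1 + k) - 1 - γ ∧ β + γ + k = β + γ + (1 + k) - 1 ∧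
      1 + k - 1 = k := by
    omega
  rw [binomDetFactor, e₁, e₂, e₃, e₄, e₅]

theorem stmt0 (α β γ : ℕ) (hα : 1 ≤ α) (hγ : γ = 0 ∨ γ = 1) :
    (Matrix.of fun i j : Fin α =>
        ibinom ((β : ℤ) + (j.1 + 1)) (2 * ((j.1 : ℤ) + 1) - ((i.1 : ℤ) + 1) - (γ : ℤ))).det
    = ∏ j ∈ Finset.Icc 1 α,
        ((Nat.factorial (β + j) : ℚ) * (Nat.factorial (j - 1) : ℚ) *
          poch ((2 * β + γ + j + 1 : ℕ) : ℚ) (j - 1)) /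
        ((Nat.factorial (2 * j - 1 - γ) : ℚ) * (Nat.factorial (β + γ + j - 1) : ℚ)) :=
  stmt0_general α β γ hγ
end

section
/- Let R be a commutative ring, n ≥ 1 an integer, and X_1,…,X_n, A_2,…,A_n, B_2,…,B_n elements of R. Then det_{1≤i,j≤n}( ∏_{k=i+1}^{n}(X_j+A_k) · ∏_{k=2}^{i}(X_j+B_k) ) = ∏_{1≤i<j≤n}(X_i − X_j) · ∏_{2≤i≤j≤n}(B_i − A_j). -/
open Finset Polynomial

set_option maxHeartbeats 1000000
set_option synthInstance.maxHeartbeats 400000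

section Defs
variable {R : Type*} [CommRing R] {R' : Type*} [CommRing R']

def lhsD (n : ℕ) (X A B : ℕ → R) : R :=
  (Matrix.of fun i j : Fin n =>
      (∏ k ∈ Finset.Icc (i.1 + 2) n, (X (j.1 + 1) + A k)) *
      (∏ k ∈ Finset.Icc 2 (i.1 + 1), (X (j.1 + 1) + B k))).det

def rhsD (n : ℕ) (X A B : ℕ → R) : R :=
  (∏ i ∈ Finset.Icc 1 n, ∏ j ∈ Finset.Icc (i + 1) n, (X i - X j)) *
  (∏ i ∈ Finset.Icc 2 n, ∏ j ∈ Finset.Icc i n, (B i - A j))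

lemma map_lhsD (f : R →+* R') (n : ℕ) (X A B : ℕ → R) :
    f (lhsD n X A B) = lhsD n (f ∘ X) (f ∘ A) (f ∘ B) := by
  rw [lhsD, lhsD, RingHom.map_det]
  congr 1
  ext i j
  simp [Matrix.map_apply, map_prod, Function.comp]

lemma map_rhsD (f : R →+* R') (n : ℕ) (X A B : ℕ → R) :
    f (rhsD n X A B) = rhsD n (f ∘ X) (f ∘ A) (f ∘ B) := by
  simp [rhsD, map_prod, Function.comp]

lemma prod_fin_icc (n : ℕ) (f : ℕ → R) : (∏ j : Fin n, f (j.1 + 1)) = ∏ i ∈ Icc 1 n, f i := by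
  induction n with
  | zero => simp
  | succ n ih =>
    rw [Fin.prod_univ_castSucc, Finset.prod_Icc_succ_top (by omega)]
    simp [ih]

lemma rhsD_split (n : ℕ) (X A B : ℕ → R) :
    rhsD (n + 1) X A B =
      (∏ i ∈ Icc 1 n, (X i - X (n + 1))) *
      ((∏ k ∈ Icc 2 (n + 1), (B k - A (n + 1))) * rhsD n X A B) := by
  rcases Nat.eq_zero_or_pos n with rfl | hn
  · have e1 : Finset.Icc 2 1 = (∅ : Finset ℕ) := Finset.Icc_eq_empty (by omega)
    have e2 : Finset.Icc 1 0 = (∅ : Finset ℕ) := Finset.Icc_eq_empty (by omega)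
    have e3 : Finset.Icc 2 0 = (∅ : Finset ℕ) := Finset.Icc_eq_empty (by omega)
    simp [rhsD, e1, e2, e3]
  rw [rhsD, rhsD]
  have h1 : (∏ i ∈ Icc 1 (n+1), ∏ j ∈ Icc (i + 1) (n+1), (X i - X j))
      = (∏ i ∈ Icc 1 n, (X i - X (n+1))) *
        (∏ i ∈ Icc 1 n, ∏ j ∈ Icc (i + 1) n, (X i - X j)) := by
    rw [Finset.prod_Icc_succ_top (by omega)]
    rw [Finset.Icc_eq_empty (by omega : ¬ (n+1+1 ≤ n+1)), Finset.prod_empty, mul_one]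
    rw [Finset.prod_congr rfl (fun i hi => Finset.prod_Icc_succ_top
      (by simp only [Finset.mem_Icc] at hi; omega) (fun j => X i - X j))]
    rw [Finset.prod_mul_distrib, mul_comm]
  have h2 : (∏ i ∈ Icc 2 (n+1), ∏ j ∈ Icc i (n+1), (B i - A j))
      = (∏ k ∈ Icc 2 (n + 1), (B k - A (n + 1))) *
        (∏ i ∈ Icc 2 n, ∏ j ∈ Icc i n, (B i - A j)) := by
    rw [Finset.prod_congr rfl (fun i hi => Finset.prod_Icc_succ_top
      (by simp only [Finset.mem_Icc] at hi; omega) (fun j => B i - A j))]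
    rw [Finset.prod_mul_distrib, mul_comm]
    congr 1
    rw [Finset.prod_Icc_succ_top (by omega : 2 ≤ n + 1)]
    rw [Finset.Icc_eq_empty (by omega : ¬ (n+1 ≤ n)), Finset.prod_empty, mul_one]
  rw [h1, h2]; ring

lemma natDegree_det_le' {m : ℕ} (M : Matrix (Fin m) (Fin m) R[X]) (d : Fin m → ℕ)
    (h : ∀ i j, (M i j).natDegree ≤ d j) : M.det.natDegree ≤ ∑ j, d j := by
  rw [Matrix.det_apply']
  refine Polynomial.natDegree_sum_le_of_forall_le _ _ fun σ _ => ?_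
  refine le_trans (Polynomial.natDegree_mul_le) ?_
  rw [Polynomial.natDegree_intCast, zero_add]
  exact le_trans (Polynomial.natDegree_prod_le _ _) (Finset.sum_le_sum fun i _ => h _ i)

end Defs

section Eval
variable {R : Type*} [CommRing R]

lemma lhsD_eval (n : ℕ) (X A B : ℕ → R) (hX : X (n + 1) = - A (n + 1))
    (ih : lhsD n X A B = rhsD n X A B) :
    lhsD (n + 1) X A B = rhsD (n + 1) X A B := by
  have hXA : X (n + 1) + A (n + 1) = 0 := by rw [hX]; ring
  set M : Matrix (Fin (n+1)) (Fin (n+1)) R := Matrix.of fun i j =>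
      (∏ k ∈ Finset.Icc (i.1 + 2) (n+1), (X (j.1 + 1) + A k)) *
      (∏ k ∈ Finset.Icc 2 (i.1 + 1), (X (j.1 + 1) + B k)) with hM
  set N : Matrix (Fin n) (Fin n) R := Matrix.of fun i j =>
      (∏ k ∈ Finset.Icc (i.1 + 2) n, (X (j.1 + 1) + A k)) *
      (∏ k ∈ Finset.Icc 2 (i.1 + 1), (X (j.1 + 1) + B k)) with hN
  have hdet : lhsD (n+1) X A B = M.det := rfl
  have hNdet : N.det = lhsD n X A B := rfl
  rw [hdet, Matrix.det_succ_column M (Fin.last n),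
    Finset.sum_eq_single (Fin.last n) ?_ (by simp)]
  · -- main term
    have hml : M (Fin.last n) (Fin.last n) = ∏ k ∈ Icc 2 (n+1), (B k - A (n+1)) := by
      show (∏ k ∈ Finset.Icc (n + 2) (n+1), (X (n + 1) + A k)) *
        (∏ k ∈ Finset.Icc 2 (n + 1), (X (n + 1) + B k)) = _
      rw [Finset.Icc_eq_empty (by omega : ¬ (n+2 ≤ n+1)), Finset.prod_empty, one_mul]
      exact Finset.prod_congr rfl fun k _ => by rw [hX]; ring
    have hmin : M.submatrix (Fin.last n).succAbove (Fin.last n).succAbove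
        = Matrix.of (fun i j : Fin n => (X (j.1+1) + A (n+1)) * N i j) := by
      ext i j
      simp only [Matrix.submatrix_apply, Fin.succAbove_last, Matrix.of_apply, hM, hN,
        Fin.coe_castSucc]
      rw [Finset.prod_Icc_succ_top (show i.1+2 ≤ n+1 by omega)]
      ring
    rw [hml, hmin, Matrix.det_mul_row (fun j : Fin n => X (j.1+1) + A (n+1)) N]
    rw [prod_fin_icc n (fun i => X i + A (n+1)), hNdet, ih]
    rw [rhsD_split]
    have hxprod : (∏ i ∈ Icc 1 n, (X i - X (n + 1))) = ∏ i ∈ Icc 1 n, (X i + A (n+1)) :=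
      Finset.prod_congr rfl fun i _ => by rw [hX]; ring
    rw [hxprod, Fin.val_last]
    have : (-1 : R) ^ (n + n) = 1 := by
      rw [← two_mul, pow_mul]; norm_num
    rw [this]; ring
  · intro b _ hb
    have hb' : b.1 < n := by
      rcases lt_or_eq_of_le (Nat.lt_succ_iff.mp b.2) with h | h
      · exact h
      · exact absurd (Fin.ext h) hb
    have hp0 : (∏ k ∈ Finset.Icc (b.1 + 2) (n+1), (X (n + 1) + A k)) = 0 :=
      Finset.prod_eq_zero (i := n+1) (Finset.mem_Icc.mpr ⟨by omega, le_refl _⟩) hXA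
    have hzero : M b (Fin.last n) = 0 := by
      show (∏ k ∈ Finset.Icc (b.1 + 2) (n+1), (X (n + 1) + A k)) * _ = 0
      rw [hp0, zero_mul]
    rw [hzero, mul_zero, zero_mul]

end Eval

section Univ

abbrev SS := MvPolynomial ((ℕ ⊕ ℕ) ⊕ ℕ) ℤ

noncomputable def xv (i : ℕ) : SS := MvPolynomial.X (Sum.inl (Sum.inl i))
noncomputable def av (i : ℕ) : SS := MvPolynomial.X (Sum.inl (Sum.inr i))
noncomputable def bv (i : ℕ) : SS := MvPolynomial.X (Sum.inr i)

lemma transfer (n : ℕ) (h : lhsD n xv av bv = rhsD n xv av bv)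
    {R : Type*} [CommRing R] (X A B : ℕ → R) : lhsD n X A B = rhsD n X A B := by
  let φ : SS →+* R := MvPolynomial.eval₂Hom (Int.castRingHom R)
    (fun v => Sum.elim (Sum.elim X A) B v)
  have hx : φ ∘ xv = X := funext fun i => by simp [φ, xv]
  have ha : φ ∘ av = A := funext fun i => by simp [φ, av]
  have hb : φ ∘ bv = B := funext fun i => by simp [φ, bv]
  have h2 := congrArg φ h
  rwa [map_lhsD, map_rhsD, hx, ha, hb] at h2

lemma hxvinj : Function.Injective xv := fun a b h => by
  have := MvPolynomial.X_injective h
  simpa using this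

end Univ

lemma natDegree_CC_sub {K : Type*} [CommRing K] (a b : K) :
    (Polynomial.C a - Polynomial.C b).natDegree ≤ 0 := by
  rw [← Polynomial.C_sub]; simp

lemma natDegree_CC_add {K : Type*} [CommRing K] (a b : K) :
    (Polynomial.C a + Polynomial.C b).natDegree ≤ 0 := by
  rw [← Polynomial.C_add]; simp

lemma key : ∀ n : ℕ, lhsD n xv av bv = rhsD n xv av bv := by
  intro n
  induction n with
  | zero =>
    have e1 : Finset.Icc 1 0 = (∅ : Finset ℕ) := Finset.Icc_eq_empty (by omega)
    have e2 : Finset.Icc 2 0 = (∅ : Finset ℕ) := Finset.Icc_eq_empty (by omega)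
    simp [lhsD, rhsD, e1, e2]
  | succ n ih =>
    classical
    have IH : ∀ (R : Type) (_ : CommRing R) (X A B : ℕ → R), lhsD n X A B = rhsD n X A B :=
      fun R _ X A B => transfer n ih X A B
    set K := FractionRing SS with hK
    set ψ : SS →+* Polynomial SS := MvPolynomial.eval₂Hom
      (Polynomial.C.comp MvPolynomial.C)
      (fun v => if v = Sum.inl (Sum.inl (n+1)) then Polynomial.X
        else Polynomial.C (MvPolynomial.X v)) with hψ
    set Φ : SS →+* Polynomial K := (Polynomial.mapRingHom (algebraMap SS K)).comp ψ with hΦ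
    have hψinj : Function.Injective ψ := by
      have hcomp : (Polynomial.eval₂RingHom (RingHom.id SS) (xv (n+1))).comp ψ
          = RingHom.id SS := by
        apply MvPolynomial.ringHom_ext
        · intro r; simp [hψ]
        · intro v
          by_cases hv : v = Sum.inl (Sum.inl (n+1)) <;> simp [hψ, hv, xv]
      intro a b hab
      have ha := congrArg (Polynomial.eval₂RingHom (RingHom.id SS) (xv (n+1))) hab
      simpa [← RingHom.comp_apply, hcomp] using ha
    have hΦinj : Function.Injective Φ := fun a b hab =>
      hψinj (Polynomial.map_injective _ (IsFractionRing.injective SS K) hab)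
    set ξ : ℕ → K := fun i => algebraMap SS K (xv i) with hξ
    set α : ℕ → K := fun i => algebraMap SS K (av i) with hα
    set β : ℕ → K := fun i => algebraMap SS K (bv i) with hβ
    have hψx : ∀ v, ψ (MvPolynomial.X v) = if v = Sum.inl (Sum.inl (n+1))
        then Polynomial.X else Polynomial.C (MvPolynomial.X v) := fun v =>
      MvPolynomial.eval₂Hom_X' _ _ v
    have hΦx : ∀ j, Φ (xv j) = if j = n+1 then Polynomial.X else Polynomial.C (ξ j) := by
      intro j
      show Polynomial.map (algebraMap SS K) (ψ (xv j)) = _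
      rw [xv, hψx]
      by_cases hj : j = n+1
      · rw [if_pos (by rw [hj]), if_pos hj, Polynomial.map_X]
      · rw [if_neg (by simpa using hj), if_neg hj, Polynomial.map_C]; rfl
    have hΦa : ∀ k, Φ (av k) = Polynomial.C (α k) := by
      intro k
      show Polynomial.map (algebraMap SS K) (ψ (av k)) = _
      rw [av, hψx, if_neg (by simp), Polynomial.map_C]; rfl
    have hΦb : ∀ k, Φ (bv k) = Polynomial.C (β k) := by
      intro k
      show Polynomial.map (algebraMap SS K) (ψ (bv k)) = _
      rw [bv, hψx, if_neg (by simp), Polynomial.map_C]; rfl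
    -- degree bounds
    have hXC1 : ∀ c : K, (Polynomial.X + Polynomial.C c).natDegree ≤ 1 := fun c =>
      le_of_eq (Polynomial.natDegree_X_add_C c)
    have deg1 : (Φ (lhsD (n+1) xv av bv)).natDegree ≤ n := by
      rw [map_lhsD Φ (n+1) xv av bv, lhsD]
      refine le_trans (natDegree_det_le' _ (fun j => if j = Fin.last n then n else 0) ?_) ?_
      · intro i j
        simp only [Matrix.of_apply]
        by_cases hj : j = Fin.last n
        · subst hj
          rw [if_pos rfl]
          refine le_trans (Polynomial.natDegree_mul_le) ?_
          have hx1 : (Φ ∘ xv) ((Fin.last n).1 + 1) = Polynomial.X := by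
            rw [Function.comp_apply, Fin.val_last, hΦx, if_pos rfl]
          have b1 : ((∏ k ∈ Icc (i.1+2) (n+1), ((Φ ∘ xv) ((Fin.last n).1 + 1) + (Φ ∘ av) k))).natDegree
              ≤ n - i.1 := by
            refine le_trans (Polynomial.natDegree_prod_le _ _) ?_
            refine le_trans (Finset.sum_le_card_nsmul _ _ 1 ?_) ?_
            · intro k _
              rw [hx1, Function.comp_apply, hΦa]
              exact hXC1 _
            · simp only [smul_eq_mul, mul_one, Nat.card_Icc]
              omega
          have b2 : ((∏ k ∈ Icc 2 (i.1+1), ((Φ ∘ xv) ((Fin.last n).1 + 1) + (Φ ∘ bv) k))).natDegree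
              ≤ i.1 := by
            refine le_trans (Polynomial.natDegree_prod_le _ _) ?_
            refine le_trans (Finset.sum_le_card_nsmul _ _ 1 ?_) ?_
            · intro k _
              rw [hx1, Function.comp_apply, hΦb]
              exact hXC1 _
            · simp only [smul_eq_mul, mul_one, Nat.card_Icc]
              omega
          have := add_le_add b1 b2
          have hi := i.2
          omega
        · rw [if_neg hj]
          have hxc : (Φ ∘ xv) (j.1 + 1) = Polynomial.C (ξ (j.1+1)) := by
            have : ¬ (j.1 + 1 = n + 1) := by
              intro h; exact hj (Fin.ext (by rw [Fin.val_last]; omega))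
            rw [Function.comp_apply, hΦx, if_neg this]
          refine le_trans (Polynomial.natDegree_mul_le) ?_
          have b1 : ((∏ k ∈ Icc (i.1+2) (n+1), ((Φ ∘ xv) (j.1 + 1) + (Φ ∘ av) k))).natDegree ≤ 0 := by
            refine le_trans (Polynomial.natDegree_prod_le _ _) ?_
            refine le_trans (Finset.sum_le_card_nsmul _ _ 0 ?_) (by simp)
            intro k _
            rw [hxc, Function.comp_apply, hΦa]
            exact natDegree_CC_add _ _
          have b2 : ((∏ k ∈ Icc 2 (i.1+1), ((Φ ∘ xv) (j.1 + 1) + (Φ ∘ bv) k))).natDegree ≤ 0 := by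
            refine le_trans (Polynomial.natDegree_prod_le _ _) ?_
            refine le_trans (Finset.sum_le_card_nsmul _ _ 0 ?_) (by simp)
            intro k _
            rw [hxc, Function.comp_apply, hΦb]
            exact natDegree_CC_add _ _
          omega
      · rw [Finset.sum_ite_eq' Finset.univ (Fin.last n) (fun _ => n)]
        simp
    have deg2 : (Φ (rhsD (n+1) xv av bv)).natDegree ≤ n := by
      rw [rhsD_split, map_mul, map_mul, map_prod, map_prod]
      refine le_trans (Polynomial.natDegree_mul_le) ?_
      have b1 : (∏ i ∈ Icc 1 n, Φ (xv i - xv (n+1))).natDegree ≤ n := by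
        refine le_trans (Polynomial.natDegree_prod_le _ _) ?_
        refine le_trans (Finset.sum_le_card_nsmul _ _ 1 ?_) ?_
        · intro i hi
          simp only [Finset.mem_Icc] at hi
          rw [map_sub, hΦx, hΦx, if_neg (by omega), if_pos rfl]
          refine le_trans (Polynomial.natDegree_sub_le _ _) ?_
          simp
        · simp [Nat.card_Icc]
      have b2 : (∏ k ∈ Icc 2 (n+1), Φ (bv k - av (n+1))).natDegree ≤ 0 := by
        refine le_trans (Polynomial.natDegree_prod_le _ _) ?_
        refine le_trans (Finset.sum_le_card_nsmul _ _ 0 ?_) (by simp)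
        intro k _
        rw [map_sub, hΦb, hΦa]
        exact natDegree_CC_sub _ _
      have b3 : (Φ (rhsD n xv av bv)).natDegree ≤ 0 := by
        rw [map_rhsD Φ n xv av bv, rhsD]
        refine le_trans (Polynomial.natDegree_mul_le) ?_
        have c1 : (∏ i ∈ Icc 1 n, ∏ j ∈ Icc (i+1) n, ((Φ ∘ xv) i - (Φ ∘ xv) j)).natDegree ≤ 0 := by
          refine le_trans (Polynomial.natDegree_prod_le _ _) ?_
          refine le_trans (Finset.sum_le_card_nsmul _ _ 0 ?_) (by simp)
          intro i hi
          simp only [Finset.mem_Icc] at hi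
          refine le_trans (Polynomial.natDegree_prod_le _ _) ?_
          refine le_trans (Finset.sum_le_card_nsmul _ _ 0 ?_) (by simp)
          intro j hj
          simp only [Finset.mem_Icc] at hj
          rw [Function.comp_apply, Function.comp_apply, hΦx, hΦx,
            if_neg (by omega), if_neg (by omega)]
          exact natDegree_CC_sub _ _
        have c2 : (∏ i ∈ Icc 2 n, ∏ j ∈ Icc i n, ((Φ ∘ bv) i - (Φ ∘ av) j)).natDegree ≤ 0 := by
          refine le_trans (Polynomial.natDegree_prod_le _ _) ?_
          refine le_trans (Finset.sum_le_card_nsmul _ _ 0 ?_) (by simp)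
          intro i _
          refine le_trans (Polynomial.natDegree_prod_le _ _) ?_
          refine le_trans (Finset.sum_le_card_nsmul _ _ 0 ?_) (by simp)
          intro j _
          rw [Function.comp_apply, Function.comp_apply, hΦb, hΦa]
          exact natDegree_CC_sub _ _
        omega
      have := add_le_add b2 b3
      have h4 := le_trans (Polynomial.natDegree_mul_le
        (p := ∏ k ∈ Icc 2 (n+1), Φ (bv k - av (n+1))) (q := Φ (rhsD n xv av bv))) this
      omega
    -- the evaluation points
    have hξinj : ∀ {i j : ℕ}, ξ i = ξ j → i = j := fun h =>
      hxvinj (IsFractionRing.injective SS K h)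
    have hne : ∀ m : ℕ, ξ m ≠ -α (n+1) := by
      intro m h
      have h0 : algebraMap SS K (xv m + av (n+1)) = algebraMap SS K 0 := by
        rw [map_add, map_zero]
        show ξ m + α (n+1) = 0
        rw [h]; ring
      have h1 : xv m + av (n+1) = 0 := IsFractionRing.injective SS K h0
      have h2 := congrArg (MvPolynomial.coeff (Finsupp.single (Sum.inl (Sum.inl m)) 1)) h1
      simp [xv, av, MvPolynomial.coeff_X', Finsupp.single_eq_single_iff] at h2
    set v : Fin (n+1) → K := fun i => if i.1 < n then ξ (i.1+1) else -α (n+1) with hv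
    have hvinj : Function.Injective v := by
      intro i j hij
      simp only [hv] at hij
      by_cases hi : i.1 < n <;> by_cases hj2 : j.1 < n
      · rw [if_pos hi, if_pos hj2] at hij
        have := hξinj hij
        exact Fin.ext (by omega)
      · rw [if_pos hi, if_neg hj2] at hij
        exact absurd hij (hne _)
      · rw [if_neg hi, if_pos hj2] at hij
        exact absurd hij.symm (hne _)
      · have hi2 := i.2; have hj3 := j.2
        exact Fin.ext (by omega)
    -- evaluations vanish
    have heval : ∀ i : Fin (n+1),
        (Φ (lhsD (n+1) xv av bv) - Φ (rhsD (n+1) xv av bv)).eval (v i) = 0 := by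
      intro i
      set r : K := v i with hr
      set er : SS →+* K := (Polynomial.evalRingHom r).comp Φ with her
      have herx : ∀ j, er (xv j) = if j = n+1 then r else ξ j := by
        intro j
        rw [her, RingHom.comp_apply, hΦx]
        by_cases hj : j = n+1
        · rw [if_pos hj, if_pos hj]; simp
        · rw [if_neg hj, if_neg hj]; simp
      have hera : ∀ k, er (av k) = α k := fun k => by
        rw [her, RingHom.comp_apply, hΦa]; simp
      have herb : ∀ k, er (bv k) = β k := fun k => by
        rw [her, RingHom.comp_apply, hΦb]; simp
      rw [Polynomial.eval_sub]
      show er (lhsD (n+1) xv av bv) - er (rhsD (n+1) xv av bv) = 0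
      rw [map_lhsD er (n+1) xv av bv, map_rhsD er (n+1) xv av bv]
      by_cases hi : i.1 < n
      · have hrval : r = ξ (i.1+1) := by rw [hr, hv]; exact if_pos hi
        have hLz : lhsD (n+1) (er ∘ xv) (er ∘ av) (er ∘ bv) = 0 := by
          rw [lhsD]
          refine Matrix.det_zero_of_column_eq (i := i) (j := Fin.last n) ?_ ?_
          · intro h
            rw [h] at hi
            simp [Fin.val_last] at hi
          · intro k
            simp only [Matrix.of_apply, Function.comp_apply, Fin.val_last]
            rw [herx, herx, if_neg (by omega : ¬ (i.1 + 1 = n + 1)),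
              if_pos rfl, hrval]
        have hRz : rhsD (n+1) (er ∘ xv) (er ∘ av) (er ∘ bv) = 0 := by
          rw [rhsD]
          have hz : (∏ i0 ∈ Icc 1 (n+1), ∏ j ∈ Icc (i0+1) (n+1),
              ((er ∘ xv) i0 - (er ∘ xv) j)) = 0 := by
            refine Finset.prod_eq_zero (i := i.1+1)
              (Finset.mem_Icc.mpr ⟨by omega, by omega⟩) ?_
            refine Finset.prod_eq_zero (i := n+1)
              (Finset.mem_Icc.mpr ⟨by omega, le_refl _⟩) ?_
            rw [Function.comp_apply, Function.comp_apply, herx, herx,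
              if_neg (by omega : ¬ (i.1 + 1 = n + 1)), if_pos rfl, hrval, sub_self]
          rw [hz, zero_mul]
        rw [hLz, hRz, sub_zero]
      · have hA' : er ∘ av = α := funext hera
        have hB' : er ∘ bv = β := funext herb
        rw [hA', hB']
        have hX1 : (er ∘ xv) (n+1) = - α (n+1) := by
          rw [Function.comp_apply, herx, if_pos rfl]
          simp only [hr, hv]
          rw [if_neg hi]
        rw [lhsD_eval n (er ∘ xv) α β hX1 (IH K inferInstance (er ∘ xv) α β), sub_self]
    -- conclude
    have hPz : Φ (lhsD (n+1) xv av bv) - Φ (rhsD (n+1) xv av bv) = 0 := by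
      refine Polynomial.eq_zero_of_natDegree_lt_card_of_eval_eq_zero _ hvinj heval ?_
      have hd : (Φ (lhsD (n+1) xv av bv) - Φ (rhsD (n+1) xv av bv)).natDegree ≤ n :=
        le_trans (Polynomial.natDegree_sub_le _ _) (max_le deg1 deg2)
      rw [Fintype.card_fin]
      omega
    exact hΦinj (sub_eq_zero.mp hPz)


theorem stmt1 {R : Type*} [CommRing R] (n : ℕ) (hn : 1 ≤ n) (X A B : ℕ → R) :
    (Matrix.of fun i j : Fin n =>
        (∏ k ∈ Finset.Icc (i.1 + 2) n, (X (j.1 + 1) + A k)) *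
        (∏ k ∈ Finset.Icc 2 (i.1 + 1), (X (j.1 + 1) + B k))).det
    = (∏ i ∈ Finset.Icc 1 n, ∏ j ∈ Finset.Icc (i + 1) n, (X i - X j)) *
      (∏ i ∈ Finset.Icc 2 n, ∏ j ∈ Finset.Icc i n, (B i - A j)) := by
  exact transfer n (key n) X A B
end

section
/- Let α ≥ 2 be an even integer and b ≥ 0 an even integer. Define G_{ij} = (−1)^i · C(⌊(i+j−2)/2⌋, j−1) for 1 ≤ i ≤ α+b and 1 ≤ j ≤ α, and M_{ij} = ∑_{r=1}^{α+b} ∑_{l=1}^{α+b} G_{li} · G_{rj} · sgn(r−l) for 1 ≤ i,j ≤ α. Then for all 1 ≤ i,j ≤ α/2: (a) M_{2i,2j} = 0, and (b) M_{2i,2j−1} = ∑_{k=1}^{(α+b)/2} C(k+j−2, 2j−2) · C(k+i−2, 2i−2). -/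
open Finset

/-- `G_{ij} = (-1)^i · C(⌊(i+j-2)/2⌋, j-1)`. -/
def Gfun (i j : ℕ) : ℚ := (-1 : ℚ) ^ i * (Nat.choose ((i + j - 2) / 2) (j - 1) : ℚ)

/-- `M_{ij} = ∑_{r=1}^{α+b} ∑_{l=1}^{α+b} G_{li} · G_{rj} · sgn(r-l)`. -/
def Mfun (α b : ℕ) (i j : ℕ) : ℚ :=
  ∑ r ∈ Finset.Icc 1 (α + b), ∑ l ∈ Finset.Icc 1 (α + b),
    Gfun l i * Gfun r j * ((Int.sign ((r : ℤ) - (l : ℤ)) : ℤ) : ℚ)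

private lemma hpow_odd (k : ℕ) : ((-1:ℚ))^(2*k+1) = -1 := by
  rw [pow_succ, pow_mul, neg_one_sq, one_pow, one_mul]

private lemma hpow_even (k : ℕ) : ((-1:ℚ))^(2*k+2) = 1 := by
  rw [show 2*k+2 = 2*(k+1) from by ring, pow_mul, neg_one_sq, one_pow]

private lemma gval1 (p k : ℕ) : Gfun (2*k+1) (2*(p+1)) = -((Nat.choose (k+p) (2*p+1) : ℚ)) := by
  unfold Gfun
  rw [show (2*k+1 + 2*(p+1) - 2)/2 = k+p from by omega,
      show 2*(p+1)-1 = 2*p+1 from by omega, hpow_odd]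
  ring

private lemma gval2 (p k : ℕ) : Gfun (2*k+2) (2*(p+1)) = (Nat.choose (k+p+1) (2*p+1) : ℚ) := by
  unfold Gfun
  rw [show (2*k+2 + 2*(p+1) - 2)/2 = k+p+1 from by omega,
      show 2*(p+1)-1 = 2*p+1 from by omega, hpow_even]
  ring

private lemma gval3 (q k : ℕ) : Gfun (2*k+1) (2*q+1) = -((Nat.choose (k+q) (2*q) : ℚ)) := by
  unfold Gfun
  rw [show (2*k+1 + (2*q+1) - 2)/2 = k+q from by omega,
      show 2*q+1-1 = 2*q from by omega, hpow_odd]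
  ring

private lemma gval4 (q k : ℕ) : Gfun (2*k+2) (2*q+1) = (Nat.choose (k+q) (2*q) : ℚ) := by
  unfold Gfun
  rw [show (2*k+2 + (2*q+1) - 2)/2 = k+q from by omega,
      show 2*q+1-1 = 2*q from by omega, hpow_even]
  ring

private lemma innerSgn (g : ℕ → ℚ) (N l : ℕ) (h1 : 1 ≤ l) (h2 : l ≤ N) :
    ∑ r ∈ Icc 1 N, g r * ((Int.sign ((r:ℤ) - (l:ℤ)) : ℤ) : ℚ) =
    (∑ r ∈ Icc 1 N, g r) - 2 * (∑ r ∈ Icc 1 l, g r) + g l := by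
  have hsplit : Icc 1 l ∪ Ioc l N = Icc 1 N := by
    ext a
    simp only [mem_union, mem_Icc, mem_Ioc]
    omega
  have hdis : Disjoint (Icc 1 l) (Ioc l N) := by
    rw [Finset.disjoint_left]
    intro a ha hb
    simp only [mem_Icc] at ha
    simp only [mem_Ioc] at hb
    omega
  have e1 : ∀ f : ℕ → ℚ, (∑ r ∈ Icc 1 N, f r) = (∑ r ∈ Icc 1 l, f r) + ∑ r ∈ Ioc l N, f r := by
    intro f; rw [← hsplit, Finset.sum_union hdis]
  rw [e1, e1 g]
  have eA : ∑ r ∈ Icc 1 l, g r * ((Int.sign ((r:ℤ) - (l:ℤ)) : ℤ) : ℚ)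
      = (∑ r ∈ Icc 1 l, (if r = l then g r else 0)) - ∑ r ∈ Icc 1 l, g r := by
    rw [← Finset.sum_sub_distrib]
    refine Finset.sum_congr rfl fun r hr => ?_
    simp only [mem_Icc] at hr
    rcases eq_or_lt_of_le hr.2 with h | h
    · subst h; simp
    · rw [if_neg (by omega)]
      have hneg : (r:ℤ) - (l:ℤ) < 0 := by omega
      rw [Int.sign_eq_neg_one_of_neg hneg]
      push_cast; ring
  have eB : ∑ r ∈ Ioc l N, g r * ((Int.sign ((r:ℤ) - (l:ℤ)) : ℤ) : ℚ)
      = ∑ r ∈ Ioc l N, g r := by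
    refine Finset.sum_congr rfl fun r hr => ?_
    simp only [mem_Ioc] at hr
    have hpos : (0:ℤ) < (r:ℤ) - (l:ℤ) := by omega
    rw [Int.sign_eq_one_of_pos hpos]
    push_cast; ring
  rw [eA, eB, Finset.sum_ite_eq' (Icc 1 l) l g, if_pos (by simp [h1])]
  ring

private lemma pair_sum (φ : ℕ → ℚ) (m : ℕ) :
    ∑ l ∈ Icc 1 (2*m), φ l = ∑ k ∈ range m, (φ (2*k+1) + φ (2*k+2)) := by
  induction m with
  | zero => simp
  | succ n ih =>
    rw [Finset.sum_range_succ, ← ih, show 2*(n+1) = (2*n+1)+1 from by ring,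
        Finset.sum_Icc_succ_top (by omega), Finset.sum_Icc_succ_top (by omega),
        show 2*n+1+1 = 2*n+2 from rfl]
    ring

private lemma Mfun_eq (α b m I J : ℕ) (hm : α + b = 2*m) :
    Mfun α b I J = ∑ k ∈ range m,
      (Gfun (2*k+1) I * ((∑ r ∈ Icc 1 (2*m), Gfun r J)
          - 2*(∑ r ∈ Icc 1 (2*k+1), Gfun r J) + Gfun (2*k+1) J)
       + Gfun (2*k+2) I * ((∑ r ∈ Icc 1 (2*m), Gfun r J)
          - 2*(∑ r ∈ Icc 1 (2*k+2), Gfun r J) + Gfun (2*k+2) J)) := by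
  unfold Mfun
  rw [hm, Finset.sum_comm]
  have step : ∀ l ∈ Icc 1 (2*m),
      (∑ r ∈ Icc 1 (2*m), Gfun l I * Gfun r J * ((Int.sign ((r:ℤ)-(l:ℤ)):ℤ):ℚ))
      = Gfun l I * ((∑ r ∈ Icc 1 (2*m), Gfun r J) - 2*(∑ r ∈ Icc 1 l, Gfun r J) + Gfun l J) := by
    intro l hl
    simp only [mem_Icc] at hl
    rw [← innerSgn (fun r => Gfun r J) (2*m) l hl.1 hl.2, Finset.mul_sum]
    exact Finset.sum_congr rfl fun r _ => by ring
  rw [Finset.sum_congr rfl step, pair_sum]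

/-- Partial sums of the odd column `2q+1` over an even range vanish. -/
private lemma Sb (q m : ℕ) : ∑ r ∈ Icc 1 (2*m), Gfun r (2*q+1) = 0 := by
  induction m with
  | zero => simp
  | succ n ih =>
    rw [show 2*(n+1) = (2*n+1)+1 from by ring,
        Finset.sum_Icc_succ_top (by omega), Finset.sum_Icc_succ_top (by omega),
        ih, show 2*n+1+1 = 2*n+2 from rfl, gval3, gval4]
    ring

private lemma Sb_odd (q k : ℕ) : ∑ r ∈ Icc 1 (2*k+1), Gfun r (2*q+1)
    = -((Nat.choose (k+q) (2*q) : ℚ)) := by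
  rw [Finset.sum_Icc_succ_top (by omega), Sb, gval3]
  ring

/-- Partial sums of the even column `2(q+1)`. -/
private lemma Sa (q : ℕ) : ∀ m, ∑ r ∈ Icc 1 (2*m), Gfun r (2*(q+1))
    = (Nat.choose (m+q) (2*q+1) : ℚ) := by
  intro m
  induction m with
  | zero =>
    simp [Nat.choose_eq_zero_of_lt (show q < 2*q+1 by omega)]
  | succ n ih =>
    rw [show 2*(n+1) = (2*n+1)+1 from by ring,
        Finset.sum_Icc_succ_top (by omega), Finset.sum_Icc_succ_top (by omega),
        ih, show 2*n+1+1 = 2*n+2 from rfl, gval1, gval2,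
        show n+1+q = n+q+1 from by ring]
    ring

private lemma Sa_odd (q k : ℕ) : ∑ r ∈ Icc 1 (2*k+1), Gfun r (2*(q+1)) = 0 := by
  rw [Finset.sum_Icc_succ_top (by omega), Sa, gval1]
  ring

theorem stmt4 (α b : ℕ) (hα : 2 ≤ α) (hαe : Even α) (hb : Even b)
    (i j : ℕ) (hi : 1 ≤ i) (hi' : i ≤ α / 2) (hj : 1 ≤ j) (hj' : j ≤ α / 2) :
    Mfun α b (2 * i) (2 * j) = 0 ∧
    Mfun α b (2 * i) (2 * j - 1) =
      ∑ k ∈ Finset.Icc 1 ((α + b) / 2),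
        (Nat.choose (k + j - 2) (2 * j - 2) : ℚ) *
          (Nat.choose (k + i - 2) (2 * i - 2) : ℚ) := by
  obtain ⟨p, rfl⟩ : ∃ p, i = p + 1 := ⟨i - 1, by omega⟩
  obtain ⟨q, rfl⟩ : ∃ q, j = q + 1 := ⟨j - 1, by omega⟩
  obtain ⟨m, hm⟩ : ∃ m, α + b = 2 * m := by
    obtain ⟨a, ha⟩ := hαe; obtain ⟨c, hc⟩ := hb; exact ⟨a + c, by omega⟩
  have hdiv : (α + b) / 2 = m := by omega
  constructor
  · -- part (a)
    rw [Mfun_eq α b m _ _ hm]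
    have key : ∀ k ∈ range m,
        (Gfun (2*k+1) (2*(p+1)) * ((∑ r ∈ Icc 1 (2*m), Gfun r (2*(q+1)))
            - 2*(∑ r ∈ Icc 1 (2*k+1), Gfun r (2*(q+1))) + Gfun (2*k+1) (2*(q+1)))
         + Gfun (2*k+2) (2*(p+1)) * ((∑ r ∈ Icc 1 (2*m), Gfun r (2*(q+1)))
            - 2*(∑ r ∈ Icc 1 (2*k+2), Gfun r (2*(q+1))) + Gfun (2*k+2) (2*(q+1))))
        = ((Nat.choose (k+1+p) (2*p+1) : ℚ) * ((Nat.choose (m+q) (2*q+1) : ℚ)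
              - (Nat.choose (k+1+q) (2*q+1) : ℚ))
           - (Nat.choose (k+p) (2*p+1) : ℚ) * ((Nat.choose (m+q) (2*q+1) : ℚ)
              - (Nat.choose (k+q) (2*q+1) : ℚ))) := by
      intro k _
      rw [gval1 p k, gval2 p k, gval1 q k, gval2 q k, Sa q m, Sa_odd,
          show (2*k+2) = 2*(k+1) from by ring, Sa q (k+1),
          show k+1+p = k+p+1 from by ring, show k+1+q = k+q+1 from by ring]
      ring
    rw [Finset.sum_congr rfl key, Finset.sum_range_sub
      (fun k => (Nat.choose (k+p) (2*p+1) : ℚ) * ((Nat.choose (m+q) (2*q+1) : ℚ)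
              - (Nat.choose (k+q) (2*q+1) : ℚ)))]
    simp [Nat.choose_eq_zero_of_lt (show p < 2*p+1 by omega)]
  · -- part (b)
    rw [show 2*(q+1) - 1 = 2*q+1 from by omega, Mfun_eq α b m _ _ hm, hdiv]
    have key : ∀ k ∈ range m,
        (Gfun (2*k+1) (2*(p+1)) * ((∑ r ∈ Icc 1 (2*m), Gfun r (2*q+1))
            - 2*(∑ r ∈ Icc 1 (2*k+1), Gfun r (2*q+1)) + Gfun (2*k+1) (2*q+1))
         + Gfun (2*k+2) (2*(p+1)) * ((∑ r ∈ Icc 1 (2*m), Gfun r (2*q+1))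
            - 2*(∑ r ∈ Icc 1 (2*k+2), Gfun r (2*q+1)) + Gfun (2*k+2) (2*q+1)))
        = (Nat.choose (k+q) (2*q) : ℚ) * (Nat.choose (k+p) (2*p) : ℚ) := by
      intro k _
      rw [gval1 p k, gval2 p k, gval3 q k, gval4 q k, Sb q m, Sb_odd,
          show (2*k+2) = 2*(k+1) from by ring, Sb q (k+1),
          Nat.choose_succ_succ' (k+p) (2*p)]
      push_cast
      ring
    rw [Finset.sum_congr rfl key, ← Finset.Ico_add_one_right_eq_Icc, Finset.sum_Ico_eq_sum_range]
    refine Finset.sum_congr (by norm_num) fun k _ => ?_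
    rw [show 1+k+(q+1)-2 = k+q from by omega, show 2*(q+1)-2 = 2*q from by omega,
        show 1+k+(p+1)-2 = k+p from by omega, show 2*(p+1)-2 = 2*p from by omega]
end

section
/- For all integers j ≥ 1, t ≥ 1, and N ≥ 1, the following identity holds in ℚ: ∑_{k=1}^{N} C(k+j−2, 2j−2) · (k − 1/2) · (k − t + 1/2)_{2t−1} / (2t)! = C(N+j−2, 2j−2) · (N − t + 1/2)_{2t} · (N + j − 1) / ( (2t)! · (2t+2j−1) ). -/
open Finset

lemma poch_succ_right (a : ℚ) (n : ℕ) : poch a (n+1) = poch a n * (a + n) :=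
  Finset.prod_range_succ _ _

lemma poch_succ_left (a : ℚ) (n : ℕ) : poch a (n+1) = a * poch (a+1) n := by
  unfold poch
  rw [Finset.prod_range_succ']
  simp only [Nat.cast_add, Nat.cast_one, Nat.cast_zero, add_zero]
  rw [mul_comm]
  congr 1
  apply Finset.prod_congr rfl
  intro i _
  ring

lemma poch_nat (m n : ℕ) : poch (m : ℚ) n = (m.ascFactorial n : ℚ) := by
  induction n with
  | zero => simp [poch]
  | succ n ih =>
    rw [poch_succ_right, ih, Nat.ascFactorial_succ]
    push_cast
    ring

lemma choose_poch (m n : ℕ) :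
    (m.choose n : ℚ) * (n.factorial : ℚ) = poch ((m:ℚ) - n + 1) n := by
  rcases le_or_gt n m with h | h
  · obtain ⟨a, rfl⟩ := Nat.exists_eq_add_of_le h
    have : ((n + a : ℕ):ℚ) - n + 1 = ((a + 1 : ℕ) : ℚ) := by push_cast; ring
    rw [this, poch_nat, Nat.ascFactorial_eq_factorial_mul_choose]
    push_cast
    rw [Nat.add_comm n a]
    ring
  · rw [Nat.choose_eq_zero_of_lt h, Nat.cast_zero, zero_mul]
    symm
    apply Finset.prod_eq_zero (i := n - 1 - m) (Finset.mem_range.mpr (by omega))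
    have : ((n - 1 - m : ℕ) : ℚ) = (n:ℚ) - 1 - m := by
      push_cast [Nat.cast_sub (by omega : m ≤ n - 1), Nat.cast_sub (by omega : 1 ≤ n)]
      ring
    rw [this]; ring

lemma poch_congr {a b : ℚ} (n : ℕ) (h : a = b) : poch a n = poch b n := by rw [h]

lemma step_poch (j' t' i : ℕ) (Fj Ft : ℚ) (hFj : Fj = ((2*j').factorial : ℚ))
    (hFt : Ft = ((2*t'+2).factorial : ℚ)) :
      (Nat.choose ((i+1) + (1 + j') - 2) (2 * j') : ℚ) * (((i+1 : ℕ)) - 1/2 : ℚ) *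
          poch (((i+1:ℕ) : ℚ) - (1 + t' : ℕ) + 1/2) (2 * t' + 1) / Ft
        = poch (((i+1:ℕ):ℚ) - j') (2*j') * poch (((i+1:ℕ):ℚ) - t' - 1/2) (2*t'+2) * (((i+1:ℕ):ℚ) + j') /
      (Fj * Ft * (2*t' + 2*j' + 3))
        - poch ((i:ℚ) - j') (2*j') * poch ((i:ℚ) - t' - 1/2) (2*t'+2) * ((i:ℚ) + j') /
      (Fj * Ft * (2*t' + 2*j' + 3)) := by
  have hFj0 : Fj ≠ 0 := by rw [hFj]; exact_mod_cast (Nat.factorial_ne_zero _)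
  have hFt0 : Ft ≠ 0 := by rw [hFt]; exact_mod_cast (Nat.factorial_ne_zero _)
  have hD0 : ((2:ℚ)*t' + 2*j' + 3) ≠ 0 := by positivity
  rw [show (i+1) + (1 + j') - 2 = i + j' from by omega]
  have hch : (Nat.choose (i + j') (2 * j') : ℚ) * Fj
      = poch ((i:ℚ) - j' + 1) (2*j') := by
    rw [hFj, choose_poch]
    exact poch_congr _ (by push_cast; ring)
  push_cast
  rw [poch_congr (n := 2*t'+1) (show ((i:ℚ) + 1 - (1 + (t':ℚ)) + 1/2) = (i:ℚ) - t' + 1/2 from by ring)]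
  rw [poch_congr (n := 2*j') (show ((i:ℚ) + 1 - (j':ℚ)) = (i:ℚ) - j' + 1 from by ring)]
  rw [poch_congr (n := 2*t'+2) (show ((i:ℚ) + 1 - (t':ℚ) - 1/2) = (i:ℚ) - t' + 1/2 from by ring)]
  have g2 : poch ((i:ℚ) - t' + 1/2) (2*t'+2)
      = poch ((i:ℚ) - t' + 1/2) (2*t'+1) * ((i:ℚ) + t' + 3/2) := by
    rw [show 2*t'+2 = (2*t'+1)+1 from rfl, poch_succ_right]
    congr 1
    push_cast; ring
  have g3 : poch ((i:ℚ) - t' - 1/2) (2*t'+2)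
      = ((i:ℚ) - t' - 1/2) * poch ((i:ℚ) - t' + 1/2) (2*t'+1) := by
    rw [show 2*t'+2 = (2*t'+1)+1 from rfl, poch_succ_left]
    congr 1
    exact poch_congr _ (by ring)
  have hAB : poch ((i:ℚ) - j') (2*j') * ((i:ℚ) + j')
      = ((i:ℚ) - j') * poch ((i:ℚ) - j' + 1) (2*j') := by
    have l := poch_succ_right ((i:ℚ) - j') (2*j')
    have r := poch_succ_left ((i:ℚ) - j') (2*j')
    rw [r] at l
    push_cast at l
    linear_combination -l
  rw [g2, g3]
  rw [div_sub_div _ _ (by positivity) (by positivity)]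
  rw [div_eq_div_iff (by positivity) (by positivity)]
  linear_combination (((i:ℚ) - t' - 1/2) * poch ((i:ℚ) - t' + 1/2) (2*t'+1) * Ft * (Fj * Ft * (2*(t':ℚ) + 2*j' + 3))) * hAB + (poch ((i:ℚ) - t' + 1/2) (2*t'+1) * ((i:ℚ)+1/2) * Fj * Ft^2 * (2*(t':ℚ) + 2*j' + 3)^2) * hch

theorem stmt7 (j t N : ℕ) (hj : 1 ≤ j) (ht : 1 ≤ t) (hN : 1 ≤ N) :
    ∑ k ∈ Finset.Icc 1 N,
        (Nat.choose (k + j - 2) (2 * j - 2) : ℚ) * ((k : ℚ) - 1/2) *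
          poch ((k : ℚ) - t + 1/2) (2 * t - 1) / (Nat.factorial (2 * t) : ℚ)
    = (Nat.choose (N + j - 2) (2 * j - 2) : ℚ) * poch ((N : ℚ) - t + 1/2) (2 * t) *
        ((N : ℚ) + j - 1) /
        ((Nat.factorial (2 * t) : ℚ) * (2 * (t : ℚ) + 2 * j - 1)) := by
  obtain ⟨j', rfl⟩ : ∃ j', j = 1 + j' := ⟨j - 1, by omega⟩
  obtain ⟨t', rfl⟩ : ∃ t', t = 1 + t' := ⟨t - 1, by omega⟩
  simp only [show 2 * (1 + j') - 2 = 2 * j' from by omega,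
    show 2 * (1 + t') - 1 = 2 * t' + 1 from by omega,
    show 2 * (1 + t') = 2 * t' + 2 from by omega,
    show 2 * t' + 2 - 1 = 2 * t' + 1 from by omega]
  set Fj : ℚ := ((2*j').factorial : ℚ) with hFj
  set Ft : ℚ := ((2*t'+2).factorial : ℚ) with hFt
  have hFj0 : Fj ≠ 0 := by rw [hFj]; exact_mod_cast (Nat.factorial_ne_zero _)
  have hFt0 : Ft ≠ 0 := by rw [hFt]; exact_mod_cast (Nat.factorial_ne_zero _)
  set F : ℕ → ℚ := fun n =>
    poch ((n:ℚ) - j') (2*j') * poch ((n:ℚ) - t' - 1/2) (2*t'+2) * ((n:ℚ) + j') /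
      (Fj * Ft * (2*t' + 2*j' + 3)) with hFdef
  have hsum : ∑ k ∈ Finset.Icc 1 N,
        (Nat.choose (k + (1 + j') - 2) (2 * j') : ℚ) * ((k : ℚ) - 1/2) *
          poch ((k : ℚ) - (1 + t' : ℕ) + 1/2) (2 * t' + 1) / Ft = F N - F 0 := by
    have hstep : ∀ i : ℕ,
        (Nat.choose (1 + i + (1 + j') - 2) (2 * j') : ℚ) * (((1 + i : ℕ) : ℚ) - 1/2) *
          poch (((1 + i : ℕ) : ℚ) - (1 + t' : ℕ) + 1/2) (2 * t' + 1) / Ft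
          = F (i+1) - F i := by
      intro i
      rw [Nat.add_comm 1 i]
      simp only [hFdef]
      exact step_poch j' t' i Fj Ft hFj hFt
    rw [← Finset.Ico_add_one_right_eq_Icc, Finset.sum_Ico_eq_sum_range]
    simp only [Nat.succ_sub_one, Nat.add_sub_cancel]
    exact (Finset.sum_congr rfl fun i _ => hstep i).trans (Finset.sum_range_sub F N)
  rw [hsum]
  have hF0 : F 0 = 0 := by
    rcases Nat.eq_zero_or_pos j' with h | h
    · subst h
      simp [hFdef]
    · have hz : poch (((0:ℕ):ℚ) - j') (2*j') = 0 :=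
        Finset.prod_eq_zero (i := j') (Finset.mem_range.mpr (by omega)) (by push_cast; ring)
      simp only [hFdef, hz, zero_mul, mul_zero, zero_div]
  rw [hF0, sub_zero]
  -- now F N = RHS
  obtain ⟨N', rfl⟩ : ∃ N', N = 1 + N' := ⟨N - 1, by omega⟩
  rw [show (1 + N') + (1 + j') - 2 = N' + j' from by omega]
  have hch : (Nat.choose (N' + j') (2 * j') : ℚ) * Fj
      = poch ((N':ℚ) - j' + 1) (2*j') := by
    rw [hFj, choose_poch]
    exact poch_congr _ (by push_cast; ring)
  have hD0 : ((2:ℚ)*t' + 2*j' + 3) ≠ 0 := by positivity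
  simp only [hFdef]
  push_cast
  rw [poch_congr (n := 2*j') (show ((1:ℚ) + N' - j') = (N':ℚ) - j' + 1 from by ring)]
  rw [poch_congr (n := 2*t'+2) (show ((1:ℚ) + N' - (1 + (t':ℚ)) + 1/2) = (1:ℚ) + N' - t' - 1/2 from by ring)]
  rw [show (2 * ((1:ℚ) + (t':ℚ)) + 2 * (1 + (j':ℚ)) - 1) = 2*(t':ℚ) + 2*j' + 3 from by ring]
  rw [div_eq_div_iff (by positivity) (by positivity)]
  linear_combination -(poch ((1:ℚ) + N' - t' - 1/2) (2*t'+2) * ((1:ℚ) + N' + j') * Ft * (2*(t':ℚ) + 2*j' + 3)) * hch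
end

section
/- Let α ≥ 3 be an odd integer and let i, j be integers with 1 ≤ i, j ≤ (α−1)/2. Then ∑_{k=1}^{2α−2} ∑_{l=1}^{2α−2} [2i choose k−2i]_{−1} · [2j−1 choose l−2j+1]_{−1} · (−1)^l · (−1)^{k(k+1)/2 + l(l+1)/2} · sgn(l−k) = C(i+j−1, 2j−i−1). -/
open Finset

private def G (i j c : ℕ) : ℚ :=
  if i + c ≤ 2*j - 1 then (i.choose (2*j-1-i-c) : ℚ) * ((j-1).choose c) else 0

private lemma vand (i j N : ℕ) (hi : 1 ≤ i) (hj : 1 ≤ j) (h2i : 2*i ≤ N) (h2j : 2*j-1 ≤ N) :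
    ∑ m ∈ Icc 1 N, ((if i ≤ m ∧ m ≤ 2*i then (i.choose (m-i) : ℚ) else 0) *
      (if j ≤ m ∧ m ≤ 2*j-1 then ((j-1).choose (m-j) : ℚ) else 0))
    = ibinom ((i:ℤ) + (j:ℤ) - 1) (2*(j:ℤ) - (i:ℤ) - 1) := by
  by_cases hA : 2*j ≤ i
  · rw [ibinom, if_neg (by omega)]
    refine Finset.sum_eq_zero fun m _ => ?_
    rcases le_or_gt i m with h | h
    · rw [if_neg (show ¬(j ≤ m ∧ m ≤ 2*j-1) by omega), mul_zero]
    · rw [if_neg (show ¬(i ≤ m ∧ m ≤ 2*i) by omega), zero_mul]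
  by_cases hB : j ≤ 2*i
  swap
  · rw [ibinom, if_neg (by omega)]
    refine Finset.sum_eq_zero fun m _ => ?_
    rcases le_or_gt m (2*i) with h | h
    · rw [if_neg (show ¬(j ≤ m ∧ m ≤ 2*j-1) by omega), mul_zero]
    · rw [if_neg (show ¬(i ≤ m ∧ m ≤ 2*i) by omega), zero_mul]
  · rw [ibinom, if_pos (by omega),
      show ((i:ℤ) + (j:ℤ) - 1).toNat = i + (j-1) by omega,
      show (2*(j:ℤ) - (i:ℤ) - 1).toNat = 2*j-i-1 by omega,
      Nat.add_choose_eq, Finset.Nat.sum_antidiagonal_eq_sum_range_succ_mk]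
    push_cast
    rw [show (2*j-i-1).succ = 2*j-i by omega]
    have s1 : ∑ m ∈ Icc 1 N, ((if i ≤ m ∧ m ≤ 2*i then (i.choose (m-i) : ℚ) else 0) *
        (if j ≤ m ∧ m ≤ 2*j-1 then ((j-1).choose (m-j) : ℚ) else 0))
        = ∑ m ∈ Icc j (2*j-1), ((if i ≤ m ∧ m ≤ 2*i then (i.choose (m-i) : ℚ) else 0) *
        (if j ≤ m ∧ m ≤ 2*j-1 then ((j-1).choose (m-j) : ℚ) else 0)) := by
      refine (Finset.sum_subset ?_ ?_).symm
      · intro x hx; rw [mem_Icc] at hx ⊢; omega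
      · intro x hx hx'
        rw [mem_Icc] at hx hx'
        rw [if_neg hx', mul_zero]
    rw [s1, ← Finset.Ico_add_one_right_eq_Icc, Finset.sum_Ico_eq_sum_range,
      show 2*j-1+1-j = j by omega, ← Finset.sum_range_reflect]
    trans (∑ c ∈ range (2*j), G i j c)
    · trans (∑ c ∈ range j, G i j c)
      · refine Finset.sum_congr rfl fun c hc => ?_
        rw [mem_range] at hc
        simp only [G]
        rw [if_pos (show j ≤ j+(j-1-c) ∧ j+(j-1-c) ≤ 2*j-1 by omega),
          show j+(j-1-c)-j = j-1-c by omega, Nat.choose_symm (show c ≤ j-1 by omega)]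
        by_cases h1 : i + c ≤ 2*j-1
        · rw [if_pos h1]
          by_cases h2 : j+(j-1-c) ≤ 2*i
          · rw [if_pos (show i ≤ j+(j-1-c) ∧ j+(j-1-c) ≤ 2*i by omega),
              show j+(j-1-c)-i = 2*j-1-i-c by omega]
          · rw [if_neg (by omega), zero_mul, Nat.choose_eq_zero_of_lt (by omega),
              Nat.cast_zero, zero_mul]
        · rw [if_neg h1, if_neg (by omega), zero_mul]
      · refine Finset.sum_subset (by intro x hx; rw [mem_range] at hx ⊢; omega)
          fun c hc hc' => ?_
        rw [mem_range] at hc hc'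
        simp only [G]
        by_cases hg : i + c ≤ 2*j-1
        · rw [if_pos hg, Nat.choose_eq_zero_of_lt (show j-1 < c by omega),
            Nat.cast_zero, mul_zero]
        · rw [if_neg hg]
    · symm
      rw [← Finset.sum_range_reflect]
      trans (∑ c ∈ range (2*j-i), G i j c)
      · refine Finset.sum_congr rfl fun x hx => ?_
        rw [mem_range] at hx
        simp only [G]
        rw [show 2*j-i-1-(2*j-i-1-x) = x by omega,
          show 2*j-i-1-x = 2*j-1-i-x by omega, if_pos (by omega)]
      · refine Finset.sum_subset (by intro x hx; rw [mem_range] at hx ⊢; omega)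
          fun c hc hc' => ?_
        rw [mem_range] at hc hc'
        simp only [G]
        rw [if_neg (by omega)]

/-- The `(-1)`-binomial coefficient `[n choose k]_{-1}`: zero if `k < 0`, `k > n`, or
(`n` even and `k` odd), and `C(⌊n/2⌋, ⌊k/2⌋)` otherwise. -/
def qbin (n k : ℤ) : ℚ :=
  if k < 0 ∨ n < k ∨ (Even n ∧ Odd k) then 0
  else (Nat.choose ((Int.fdiv n 2).toNat) ((Int.fdiv k 2).toNat) : ℚ)

private lemma fdiv_two_mul (b : ℤ) : (2*b).fdiv 2 = b := by
  rw [Int.fdiv_eq_ediv_of_nonneg _ (by norm_num)]; omega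
private lemma fdiv_two_mul_add_one (b : ℤ) : (2*b+1).fdiv 2 = b := by
  rw [Int.fdiv_eq_ediv_of_nonneg _ (by norm_num)]; omega
private lemma qbin_even_odd (a c : ℤ) (h : Odd c) : qbin (2*a) c = 0 := by
  rw [qbin, if_pos (Or.inr (Or.inr ⟨⟨a, by ring⟩, h⟩))]
private lemma qbin_even_even (a b : ℤ) :
    qbin (2*a) (2*b) = if 0 ≤ b ∧ b ≤ a then (a.toNat.choose b.toNat : ℚ) else 0 := by
  rw [qbin]
  by_cases hb : 0 ≤ b ∧ b ≤ a
  · rw [if_neg (by push_neg; exact ⟨by omega, by omega, fun _ => Int.not_odd_iff_even.mpr ⟨b, by ring⟩⟩),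
      if_pos hb, fdiv_two_mul, fdiv_two_mul]
  · have h1 : (2*b < 0 ∨ 2*a < 2*b ∨ (Even (2*a) ∧ Odd (2*b))) := by
      rcases (by omega : b < 0 ∨ a < b) with h | h
      · exact Or.inl (by omega)
      · exact Or.inr (Or.inl (by omega))
    rw [if_pos h1, if_neg hb]
private lemma qbin_odd_even (a c : ℤ) :
    qbin (2*a+1) (2*c) = if 0 ≤ c ∧ c ≤ a then (a.toNat.choose c.toNat : ℚ) else 0 := by
  rw [qbin]
  have hne : ¬ Even (2*a+1) := by rintro ⟨r, hr⟩; omega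
  by_cases hc : 0 ≤ c ∧ c ≤ a
  · rw [if_neg (by push_neg; exact ⟨by omega, by omega, fun he => absurd he hne⟩),
      if_pos hc, fdiv_two_mul_add_one, fdiv_two_mul]
  · have h1 : (2*c < 0 ∨ 2*a+1 < 2*c ∨ (Even (2*a+1) ∧ Odd (2*c))) := by
      rcases (by omega : c < 0 ∨ a < c) with h | h
      · exact Or.inl (by omega)
      · exact Or.inr (Or.inl (by omega))
    rw [if_pos h1, if_neg hc]
private lemma qbin_odd_odd (a c : ℤ) :
    qbin (2*a+1) (2*c+1) = if 0 ≤ c ∧ c ≤ a then (a.toNat.choose c.toNat : ℚ) else 0 := by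
  rw [qbin]
  have hne : ¬ Even (2*a+1) := by rintro ⟨r, hr⟩; omega
  by_cases hc : 0 ≤ c ∧ c ≤ a
  · rw [if_neg (by push_neg; exact ⟨by omega, by omega, fun he => absurd he hne⟩),
      if_pos hc, fdiv_two_mul_add_one, fdiv_two_mul_add_one]
  · have h1 : (2*c+1 < 0 ∨ 2*a+1 < 2*c+1 ∨ (Even (2*a+1) ∧ Odd (2*c+1))) := by
      rcases (by omega : c < 0 ∨ a < c) with h | h
      · exact Or.inl (by omega)
      · exact Or.inr (Or.inl (by omega))
    rw [if_pos h1, if_neg hc]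
private lemma neg_one_pow_helper (e c r : ℕ) (h : e = 2*c + r) : (-1:ℚ)^e = (-1)^r := by
  subst h; rw [pow_add, pow_mul, neg_one_sq, one_pow, one_mul]

private lemma pair_term (i j m n : ℕ) (hi : 1 ≤ i) (hj : 1 ≤ j) (hm : 1 ≤ m) (hn : 1 ≤ n) :
    qbin (2 * (i:ℤ)) (((2 * m : ℕ) : ℤ) - 2 * (i:ℤ)) *
        qbin (2 * (j:ℤ) - 1) (((2 * n - 1 : ℕ) : ℤ) - 2 * (j:ℤ) + 1) *
        (-1 : ℚ) ^ (2 * n - 1) *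
        (-1 : ℚ) ^ (2 * m * (2 * m + 1) / 2 + (2 * n - 1) * (2 * n - 1 + 1) / 2) *
        ((Int.sign (((2 * n - 1 : ℕ) : ℤ) - ((2 * m : ℕ) : ℤ)) : ℤ) : ℚ) +
      qbin (2 * (i:ℤ)) (((2 * m : ℕ) : ℤ) - 2 * (i:ℤ)) *
        qbin (2 * (j:ℤ) - 1) (((2 * n : ℕ) : ℤ) - 2 * (j:ℤ) + 1) *
        (-1 : ℚ) ^ (2 * n) *
        (-1 : ℚ) ^ (2 * m * (2 * m + 1) / 2 + 2 * n * (2 * n + 1) / 2) *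
        ((Int.sign (((2 * n : ℕ) : ℤ) - ((2 * m : ℕ) : ℤ)) : ℤ) : ℚ)
    = if n = m then
        (if i ≤ m ∧ m ≤ 2 * i then (i.choose (m - i) : ℚ) else 0) *
        (if j ≤ m ∧ m ≤ 2 * j - 1 then ((j - 1).choose (m - j) : ℚ) else 0)
      else 0 := by
  obtain ⟨m', rfl⟩ : ∃ m', m = m'+1 := ⟨m-1, by omega⟩
  obtain ⟨n', rfl⟩ : ∃ n', n = n'+1 := ⟨n-1, by omega⟩
  rw [show 2*(n'+1)-1 = 2*n'+1 by omega]
  -- qbin factors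
  have hq1 : qbin (2 * (i:ℤ)) (((2 * (m'+1) : ℕ) : ℤ) - 2 * (i:ℤ))
      = if i ≤ m'+1 ∧ m'+1 ≤ 2 * i then (i.choose (m'+1 - i) : ℚ) else 0 := by
    rw [show ((2 * (m'+1) : ℕ) : ℤ) - 2 * (i:ℤ) = 2 * (((m'+1 : ℕ):ℤ) - i) by push_cast; ring,
      qbin_even_even]
    by_cases h : i ≤ m'+1 ∧ m'+1 ≤ 2*i
    · rw [if_pos (by omega), if_pos h, show ((i:ℤ)).toNat = i by omega,
        show (((m'+1 : ℕ):ℤ) - i).toNat = m'+1-i by omega]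
    · rw [if_neg (by omega), if_neg h]
  have hq2a : qbin (2 * (j:ℤ) - 1) (((2 * n' + 1 : ℕ) : ℤ) - 2 * (j:ℤ) + 1)
      = if j ≤ n'+1 ∧ n'+1 ≤ 2 * j - 1 then ((j-1).choose (n'+1 - j) : ℚ) else 0 := by
    rw [show 2 * (j:ℤ) - 1 = 2 * ((j:ℤ) - 1) + 1 by ring,
      show ((2 * n' + 1 : ℕ) : ℤ) - 2 * (j:ℤ) + 1 = 2 * (((n'+1 : ℕ):ℤ) - j) by push_cast; ring,
      qbin_odd_even]
    by_cases h : j ≤ n'+1 ∧ n'+1 ≤ 2*j - 1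
    · rw [if_pos (by omega), if_pos h, show ((j:ℤ) - 1).toNat = j - 1 by omega,
        show (((n'+1 : ℕ):ℤ) - j).toNat = n'+1-j by omega]
    · rw [if_neg (by omega), if_neg h]
  have hq2b : qbin (2 * (j:ℤ) - 1) (((2 * (n'+1) : ℕ) : ℤ) - 2 * (j:ℤ) + 1)
      = if j ≤ n'+1 ∧ n'+1 ≤ 2 * j - 1 then ((j-1).choose (n'+1 - j) : ℚ) else 0 := by
    rw [show 2 * (j:ℤ) - 1 = 2 * ((j:ℤ) - 1) + 1 by ring,
      show ((2 * (n'+1) : ℕ) : ℤ) - 2 * (j:ℤ) + 1 = 2 * (((n'+1 : ℕ):ℤ) - j) + 1 by push_cast; ring,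
      qbin_odd_odd]
    by_cases h : j ≤ n'+1 ∧ n'+1 ≤ 2*j - 1
    · rw [if_pos (by omega), if_pos h, show ((j:ℤ) - 1).toNat = j - 1 by omega,
        show (((n'+1 : ℕ):ℤ) - j).toNat = n'+1-j by omega]
    · rw [if_neg (by omega), if_neg h]
  -- powers of -1
  have hp1 : (-1:ℚ) ^ (2*n'+1) = -1 := Odd.neg_one_pow ⟨n', by ring⟩
  have hp2 : (-1:ℚ) ^ (2*(n'+1)) = 1 := Even.neg_one_pow ⟨n'+1, by ring⟩
  have d1 : 2*(m'+1)*(2*(m'+1)+1)/2 = (m'+1)*(2*(m'+1)+1) := by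
    rw [show 2*(m'+1)*(2*(m'+1)+1) = (m'+1)*(2*(m'+1)+1)*2 by ring,
      Nat.mul_div_cancel _ (by norm_num)]
  have d2 : (2*n'+1)*(2*n'+1+1)/2 = (2*n'+1)*(n'+1) := by
    rw [show (2*n'+1)*(2*n'+1+1) = (2*n'+1)*(n'+1)*2 by ring,
      Nat.mul_div_cancel _ (by norm_num)]
  have d3 : 2*(n'+1)*(2*(n'+1)+1)/2 = (n'+1)*(2*(n'+1)+1) := by
    rw [show 2*(n'+1)*(2*(n'+1)+1) = (n'+1)*(2*(n'+1)+1)*2 by ring,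
      Nat.mul_div_cancel _ (by norm_num)]
  have hE1 : (-1:ℚ) ^ (2*(m'+1)*(2*(m'+1)+1)/2 + (2*n'+1)*(2*n'+1+1)/2) = (-1:ℚ)^(m'+n') := by
    rw [d1, d2]
    exact neg_one_pow_helper _ (m'*m'+2*m'+n'*n'+n'+2) _ (by ring)
  have hE2 : (-1:ℚ) ^ (2*(m'+1)*(2*(m'+1)+1)/2 + 2*(n'+1)*(2*(n'+1)+1)/2) = (-1:ℚ)^(m'+n') := by
    rw [d1, d3]
    exact neg_one_pow_helper _ (m'*m'+2*m'+n'*n'+2*n'+3) _ (by ring)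
  -- signs
  have hs1 : ((2*n'+1 : ℕ) : ℤ) - ((2*(m'+1) : ℕ) : ℤ) = 2*((n':ℤ) - m') - 1 := by
    push_cast; ring
  have hs2 : ((2*(n'+1) : ℕ) : ℤ) - ((2*(m'+1) : ℕ) : ℤ) = 2*((n':ℤ) - m') := by
    push_cast; ring
  rw [hq1, hq2a, hq2b, hp1, hp2, hE1, hE2, hs1, hs2]
  by_cases hnm : n' = m'
  · have e1 : 2*((n':ℤ) - m') - 1 = -1 := by omega
    have e2 : 2*((n':ℤ) - m') = 0 := by omega
    have eQ : (if j ≤ n'+1 ∧ n'+1 ≤ 2*j - 1 then ((j-1).choose (n'+1 - j) : ℚ) else 0)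
        = (if j ≤ m'+1 ∧ m'+1 ≤ 2*j - 1 then ((j-1).choose (m'+1 - j) : ℚ) else 0) := by
      simp only [hnm]
    have hP : (-1:ℚ)^(m'+n') = 1 := Even.neg_one_pow ⟨m', by omega⟩
    rw [e1, e2, Int.sign_zero, show ((-1:ℤ).sign) = -1 by decide,
      if_pos (show n'+1 = m'+1 by omega), eQ, hP]
    push_cast; ring
  · rw [if_neg (show ¬(n'+1 = m'+1) by omega)]
    rcases Nat.lt_or_ge n' m' with h | h
    · rw [Int.sign_eq_neg_one_of_neg (show 2*((n':ℤ) - m') - 1 < 0 by omega),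
        Int.sign_eq_neg_one_of_neg (show 2*((n':ℤ) - m') < 0 by omega)]
      push_cast; ring
    · rw [Int.sign_eq_one_of_pos (show (0:ℤ) < 2*((n':ℤ) - m') - 1 by omega),
        Int.sign_eq_one_of_pos (show (0:ℤ) < 2*((n':ℤ) - m') by omega)]
      push_cast; ring


private lemma sum_pair (N : ℕ) (f : ℕ → ℚ) :
    ∑ k ∈ Icc 1 (2*N), f k = ∑ m ∈ Icc 1 N, (f (2*m-1) + f (2*m)) := by
  induction N with
  | zero => simp
  | succ n ih =>
    rw [show 2*(n+1) = (2*n+1)+1 by ring, Finset.sum_Icc_succ_top (by omega),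
        Finset.sum_Icc_succ_top (by omega), ih,
        Finset.sum_Icc_succ_top (show 1 ≤ n+1 by omega),
        show 2*(n+1)-1 = 2*n+1 by omega, show 2*(n+1) = 2*n+1+1 by omega]
    ring

private lemma odd_term (i m : ℕ) (hm : 1 ≤ m) :
    qbin (2 * (i:ℤ)) (((2 * m - 1 : ℕ) : ℤ) - 2 * (i:ℤ)) = 0 := by
  rw [show ((2 * m - 1 : ℕ) : ℤ) = 2 * (m:ℤ) - 1 by omega,
    show 2 * (m:ℤ) - 1 - 2 * (i:ℤ) = 2 * ((m:ℤ) - i - 1) + 1 by ring]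
  exact qbin_even_odd _ _ ⟨(m:ℤ) - i - 1, rfl⟩

theorem stmt11 (α : ℕ) (hα : 3 ≤ α) (hodd : Odd α) (i j : ℕ)
    (hi : 1 ≤ i) (hi' : i ≤ (α - 1) / 2) (hj : 1 ≤ j) (hj' : j ≤ (α - 1) / 2) :
    ∑ k ∈ Finset.Icc 1 (2 * α - 2), ∑ l ∈ Finset.Icc 1 (2 * α - 2),
      qbin (2 * (i : ℤ)) ((k : ℤ) - 2 * (i : ℤ)) *
        qbin (2 * (j : ℤ) - 1) ((l : ℤ) - 2 * (j : ℤ) + 1) *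
        (-1 : ℚ) ^ l * (-1 : ℚ) ^ (k * (k + 1) / 2 + l * (l + 1) / 2) *
        ((Int.sign ((l : ℤ) - (k : ℤ)) : ℤ) : ℚ)
    = ibinom ((i : ℤ) + (j : ℤ) - 1) (2 * (j : ℤ) - (i : ℤ) - 1) := by
  have hN1 : 2 * i ≤ α - 1 := by omega
  have hN2 : 2 * j - 1 ≤ α - 1 := by omega
  rw [show 2 * α - 2 = 2 * (α - 1) by omega]
  simp only [sum_pair]
  rw [← vand i j (α - 1) hi hj hN1 hN2]
  refine Finset.sum_congr rfl fun m hm => ?_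
  rw [mem_Icc] at hm
  calc _ = 0 + ((if i ≤ m ∧ m ≤ 2 * i then (i.choose (m - i) : ℚ) else 0) *
        (if j ≤ m ∧ m ≤ 2 * j - 1 then ((j - 1).choose (m - j) : ℚ) else 0)) := by
        congr 1
        · refine Finset.sum_eq_zero fun n hn => ?_
          rw [odd_term i m hm.1]
          ring
        · trans (∑ n ∈ Icc 1 (α - 1), if n = m then
              (if i ≤ m ∧ m ≤ 2 * i then (i.choose (m - i) : ℚ) else 0) *
              (if j ≤ m ∧ m ≤ 2 * j - 1 then ((j - 1).choose (m - j) : ℚ) else 0) else 0)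
          · refine Finset.sum_congr rfl fun n hn => ?_
            rw [mem_Icc] at hn
            exact pair_term i j m n hi hj hm.1 hn.1
          · rw [Finset.sum_ite_eq' (Icc 1 (α - 1)) m, if_pos (mem_Icc.mpr hm)]
    _ = _ := zero_add _
end

section
/- Let α ≥ 2 be an even integer and b ≥ 1 an odd integer. For 1 ≤ i,j ≤ α define M_{ij} = ∑_{r=1}^{α+b} ∑_{l=1}^{α+b} (−1)^l · [l+i−1 choose 2i−1]_{−1} · (−1)^r · [r+j−1 choose 2j−1]_{−1} · sgn(r−l). Then for all 1 ≤ i,j ≤ α/2, the following holds in ℚ: M_{2i,2j} = C( (α+b−1)/2 + j, 2j ) · C( (α+b−1)/2 + i, 2i ) · (j−i) / (j+i). -/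
open Finset

/-- `M_{ij} = ∑_{r=1}^{α+b} ∑_{l=1}^{α+b} (-1)^l [l+i-1 ch 2i-1]_{-1} (-1)^r
[r+j-1 ch 2j-1]_{-1} sgn(r-l)`. -/
def Mq (α b : ℕ) (i j : ℕ) : ℚ :=
  ∑ r ∈ Finset.Icc 1 (α + b), ∑ l ∈ Finset.Icc 1 (α + b),
    (-1 : ℚ) ^ l * qbin ((l : ℤ) + i - 1) (2 * (i : ℤ) - 1) *
      (-1 : ℚ) ^ r * qbin ((r : ℤ) + j - 1) (2 * (j : ℤ) - 1) *
      ((Int.sign ((r : ℤ) - (l : ℤ)) : ℤ) : ℚ)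

lemma qbin_zero (n k : ℤ) (hn : Even n) (hk : Odd k) : qbin n k = 0 := by
  unfold qbin; rw [if_pos]; exact Or.inr (Or.inr ⟨hn, hk⟩)

lemma qbin_eval (s i : ℕ) (hi : 1 ≤ i) :
    qbin (2*(s:ℤ) + 2*(i:ℤ) - 1) (4*(i:ℤ) - 1)
      = ((s+i-1).choose (2*i-1) : ℚ) := by
  unfold qbin
  rcases lt_or_ge s i with h | h
  · rw [if_pos, Nat.choose_eq_zero_of_lt (by omega), Nat.cast_zero]
    right; left; omega
  · rw [if_neg]
    · rw [Int.fdiv_eq_ediv_of_nonneg _ (by norm_num), Int.fdiv_eq_ediv_of_nonneg _ (by norm_num)]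
      have e1 : ((2*(s:ℤ)+2*(i:ℤ)-1)/2).toNat = s+i-1 := by omega
      have e2 : ((4*(i:ℤ)-1)/2).toNat = 2*i-1 := by omega
      rw [e1, e2]
    · rintro (h1 | h1 | ⟨h1, h2⟩)
      · omega
      · omega
      · rw [Int.even_iff] at h1; omega

lemma qbin_eval' (n k : ℤ) (s i : ℕ) (hi : 1 ≤ i)
    (hn : n = 2*(s:ℤ) + 2*(i:ℤ) - 1) (hk : k = 4*(i:ℤ) - 1) :
    qbin n k = ((s+i-1).choose (2*i-1) : ℚ) := by
  subst hn; subst hk; exact qbin_eval s i hi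

lemma sum_even_only (N : ℕ) (f : ℕ → ℚ) (h : ∀ l, Odd l → f l = 0) :
    ∑ l ∈ Icc 1 (2*N+1), f l = ∑ s ∈ Icc 1 N, f (2*s) := by
  induction N with
  | zero => simp [h 1 ⟨0, rfl⟩]
  | succ n ih =>
    have e : 2*(n+1)+1 = (2*n+1)+1+1 := by ring
    rw [e, Finset.sum_Icc_succ_top (by omega), Finset.sum_Icc_succ_top (by omega), ih,
      Finset.sum_Icc_succ_top (by omega) (fun s => f (2*s)),
      h ((2*n+1)+1+1) ⟨n+1, by ring⟩]
    have e2 : 2*(n+1) = (2*n+1)+1 := by ring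
    rw [e2]; ring

def Sq (N i j : ℕ) : ℚ :=
  ∑ t ∈ Icc 1 N, ∑ s ∈ Icc 1 N,
    ((s+i-1).choose (2*i-1) : ℚ) * ((t+j-1).choose (2*j-1) : ℚ) *
      ((Int.sign ((t:ℤ) - (s:ℤ)) : ℤ) : ℚ)

lemma pascal' (n i : ℕ) (hi : 1 ≤ i) :
    (n+1+i).choose (2*i) = (n+i).choose (2*i-1) + (n+i).choose (2*i) := by
  obtain ⟨k, hk⟩ : ∃ k, 2*i = k+1 := ⟨2*i-1, by omega⟩
  have e5 : n+1+i = (n+i)+1 := by omega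
  rw [hk, e5]
  simp [Nat.choose_succ_succ]

lemma hockey (i : ℕ) (hi : 1 ≤ i) (N : ℕ) :
    ∑ s ∈ Icc 1 N, (s+i-1).choose (2*i-1) = (N+i).choose (2*i) := by
  induction N with
  | zero => simp [Nat.choose_eq_zero_of_lt (by omega : i < 2*i)]
  | succ n ih =>
    rw [Finset.sum_Icc_succ_top (by omega), ih, pascal' n i hi]
    have e6 : n+1+i-1 = n+i := by omega
    rw [e6]
    omega

lemma ratio (N i : ℕ) (hi : 1 ≤ i) :
    (2*i : ℚ) * ((N+i).choose (2*i) : ℚ)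
      = ((N:ℚ) + 1 - i) * ((N+i).choose (2*i-1) : ℚ) := by
  rcases le_or_gt i (N+1) with h | h
  · have key := Nat.choose_succ_right_eq (N+i) (2*i-1)
    have e : 2*i-1+1 = 2*i := by omega
    have e2 : N+i-(2*i-1) = N+1-i := by omega
    rw [e, e2] at key
    have := congrArg (fun x : ℕ => (x : ℚ)) key
    push_cast [Nat.cast_sub h] at this
    linarith [this]
  · rw [Nat.choose_eq_zero_of_lt (by omega), Nat.choose_eq_zero_of_lt (by omega)]
    simp

lemma double_succ (N : ℕ) (F : ℕ → ℕ → ℚ) :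
    ∑ t ∈ Icc 1 (N+1), ∑ s ∈ Icc 1 (N+1), F t s
      = (∑ t ∈ Icc 1 N, ∑ s ∈ Icc 1 N, F t s) + (∑ s ∈ Icc 1 N, F (N+1) s)
        + (∑ t ∈ Icc 1 N, F t (N+1)) + F (N+1) (N+1) := by
  rw [Finset.sum_Icc_succ_top (by omega)]
  rw [Finset.sum_congr rfl (fun t _ => Finset.sum_Icc_succ_top (by omega) (F t)),
    Finset.sum_add_distrib, Finset.sum_Icc_succ_top (by omega)]
  ring

lemma Sq_eq (i j : ℕ) (hi : 1 ≤ i) (hj : 1 ≤ j) (N : ℕ) :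
    Sq N i j = ((N+j).choose (2*j) : ℚ) * ((N+i).choose (2*i) : ℚ) *
      ((j:ℚ) - (i:ℚ)) / ((j:ℚ) + (i:ℚ)) := by
  induction N with
  | zero =>
    simp [Sq, Nat.choose_eq_zero_of_lt (by omega : j < 2*j)]
  | succ N ih =>
    unfold Sq
    rw [double_succ]
    have hback : (∑ t ∈ Icc 1 N, ∑ s ∈ Icc 1 N,
        ((s+i-1).choose (2*i-1) : ℚ) * ((t+j-1).choose (2*j-1) : ℚ) *
          ((Int.sign ((t:ℤ) - (s:ℤ)) : ℤ) : ℚ)) = Sq N i j := rfl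
    have hrow : ∑ s ∈ Icc 1 N,
        ((s+i-1).choose (2*i-1) : ℚ) * ((N+1+j-1).choose (2*j-1) : ℚ) *
          ((Int.sign (((N+1:ℕ):ℤ) - (s:ℤ)) : ℤ) : ℚ)
        = ((N+j).choose (2*j-1) : ℚ) * ((N+i).choose (2*i) : ℚ) := by
      have step : ∀ s ∈ Icc 1 N,
          ((s+i-1).choose (2*i-1) : ℚ) * ((N+1+j-1).choose (2*j-1) : ℚ) *
            ((Int.sign (((N+1:ℕ):ℤ) - (s:ℤ)) : ℤ) : ℚ)
          = ((s+i-1).choose (2*i-1) : ℚ) * ((N+j).choose (2*j-1) : ℚ) := by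
        intro s hs
        simp only [mem_Icc] at hs
        have hsg : Int.sign (((N+1:ℕ):ℤ) - (s:ℤ)) = 1 := by
          rw [Int.sign_eq_one_iff_pos]; push_cast; omega
        have e : N+1+j-1 = N+j := by omega
        rw [hsg, e]; push_cast; ring
      rw [Finset.sum_congr rfl step, ← Finset.sum_mul, ← Nat.cast_sum, hockey i hi N]
      ring
    have hcol : ∑ t ∈ Icc 1 N,
        ((N+1+i-1).choose (2*i-1) : ℚ) * ((t+j-1).choose (2*j-1) : ℚ) *
          ((Int.sign ((t:ℤ) - ((N+1:ℕ):ℤ)) : ℤ) : ℚ)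
        = -(((N+i).choose (2*i-1) : ℚ) * ((N+j).choose (2*j) : ℚ)) := by
      have step : ∀ t ∈ Icc 1 N,
          ((N+1+i-1).choose (2*i-1) : ℚ) * ((t+j-1).choose (2*j-1) : ℚ) *
            ((Int.sign ((t:ℤ) - ((N+1:ℕ):ℤ)) : ℤ) : ℚ)
          = (-((N+i).choose (2*i-1) : ℚ)) * ((t+j-1).choose (2*j-1) : ℚ) := by
        intro t ht
        simp only [mem_Icc] at ht
        have hsg : Int.sign ((t:ℤ) - ((N+1:ℕ):ℤ)) = -1 := by
          rw [Int.sign_eq_neg_one_iff_neg]; push_cast; omega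
        have e : N+1+i-1 = N+i := by omega
        rw [hsg, e]; push_cast; ring
      rw [Finset.sum_congr rfl step, ← Finset.mul_sum, ← Nat.cast_sum, hockey j hj N]
      ring
    rw [hback, hrow, hcol, ih]
    have hdiag : ((Int.sign (((N+1:ℕ):ℤ) - ((N+1:ℕ):ℤ)) : ℤ) : ℚ) = 0 := by simp
    rw [hdiag, mul_zero, add_zero]
    have pi' : ((N+1+i).choose (2*i) : ℚ) = ((N+i).choose (2*i-1) : ℚ) + ((N+i).choose (2*i) : ℚ) := by
      rw [pascal' N i hi]; push_cast; ring
    have pj' : ((N+1+j).choose (2*j) : ℚ) = ((N+j).choose (2*j-1) : ℚ) + ((N+j).choose (2*j) : ℚ) := by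
      rw [pascal' N j hj]; push_cast; ring
    rw [pi', pj']
    have hne : (j:ℚ) + (i:ℚ) ≠ 0 := by positivity
    have hri := ratio N i hi
    have hrj := ratio N j hj
    field_simp
    linear_combination (((N+j).choose (2*j-1) : ℕ) : ℚ) * hri - (((N+i).choose (2*i-1) : ℕ) : ℚ) * hrj

lemma Mq_eq_Sq (a b N i j : ℕ) (hi : 1 ≤ i) (hj : 1 ≤ j) (hab : a + b = 2*N+1) :
    Mq a b (2*i) (2*j) = Sq N i j := by
  unfold Mq Sq
  rw [hab]
  have hzero_r : ∀ r : ℕ, Odd r → (∑ l ∈ Icc 1 (2*N+1),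
      (-1:ℚ)^l * qbin ((l:ℤ) + ((2*i : ℕ):ℤ) - 1) (2*((2*i : ℕ):ℤ) - 1) * (-1:ℚ)^r *
        qbin ((r:ℤ) + ((2*j : ℕ):ℤ) - 1) (2*((2*j : ℕ):ℤ) - 1) *
        ((Int.sign ((r:ℤ)-(l:ℤ)) : ℤ):ℚ)) = 0 := by
    intro r hr
    apply Finset.sum_eq_zero
    intro l _
    have hq : qbin ((r:ℤ) + ((2*j : ℕ):ℤ) - 1) (2*((2*j : ℕ):ℤ) - 1) = 0 := by
      apply qbin_zero
      · obtain ⟨c, hc⟩ := hr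
        rw [Int.even_iff]; subst hc; push_cast; omega
      · rw [Int.odd_iff]; push_cast; omega
    rw [hq]; ring
  rw [sum_even_only N _ hzero_r]
  apply Finset.sum_congr rfl
  intro t _
  have hzero_l : ∀ l : ℕ, Odd l →
      ((-1:ℚ)^l * qbin ((l:ℤ) + ((2*i : ℕ):ℤ) - 1) (2*((2*i : ℕ):ℤ) - 1) * (-1:ℚ)^(2*t) *
        qbin (((2*t : ℕ):ℤ) + ((2*j : ℕ):ℤ) - 1) (2*((2*j : ℕ):ℤ) - 1) *
        ((Int.sign (((2*t : ℕ):ℤ)-(l:ℤ)) : ℤ):ℚ)) = 0 := by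
    intro l hl
    have hq : qbin ((l:ℤ) + ((2*i : ℕ):ℤ) - 1) (2*((2*i : ℕ):ℤ) - 1) = 0 := by
      apply qbin_zero
      · obtain ⟨c, hc⟩ := hl
        rw [Int.even_iff]; subst hc; push_cast; omega
      · rw [Int.odd_iff]; push_cast; omega
    rw [hq]; ring
  rw [sum_even_only N _ hzero_l]
  apply Finset.sum_congr rfl
  intro s _
  rw [qbin_eval' _ _ s i hi (by push_cast; ring) (by push_cast; ring),
    qbin_eval' _ _ t j hj (by push_cast; ring) (by push_cast; ring)]
  have hsg : ((2*t : ℕ):ℤ) - ((2*s : ℕ):ℤ) = 2*((t:ℤ)-(s:ℤ)) := by push_cast; ring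
  rw [hsg, Int.sign_mul]
  have h2 : Int.sign 2 = 1 := rfl
  rw [h2, one_mul]
  simp [pow_mul]

theorem stmt12 (α b : ℕ) (hα : 2 ≤ α) (hαe : Even α) (hb1 : 1 ≤ b) (hbo : Odd b)
    (i j : ℕ) (hi : 1 ≤ i) (hi' : i ≤ α / 2) (hj : 1 ≤ j) (hj' : j ≤ α / 2) :
    Mq α b (2 * i) (2 * j)
    = (Nat.choose ((α + b - 1) / 2 + j) (2 * j) : ℚ) *
        (Nat.choose ((α + b - 1) / 2 + i) (2 * i) : ℚ) *
        ((j : ℚ) - (i : ℚ)) / ((j : ℚ) + (i : ℚ)) := by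
  obtain ⟨c, hc⟩ := hαe
  obtain ⟨d, hd⟩ := hbo
  have hab : α + b = 2*((α+b-1)/2)+1 := by omega
  rw [Mq_eq_Sq α b ((α+b-1)/2) i j hi hj hab, Sq_eq i j hi hj]
end

section
/- Let α ≥ 1 be an odd integer and b ≥ 0 an even integer. For 1 ≤ i,j ≤ α define M_{ij} = ∑_{r=1}^{α+b} ∑_{l=1}^{α+b} (−1)^l · [l+i−1 choose 2i−1]_{−1} · (−1)^r · [r+j−1 choose 2j−1]_{−1} · sgn(r−l). Then for all 1 ≤ i,j ≤ (α+1)/2, the following holds in ℚ: M_{2i−1,2j−1} = C( (α+b−1)/2 + j, 2j−1 ) · C( (α+b−1)/2 + i, 2i−1 ) · (j−i) / (i+j−1). -/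
open Finset

lemma qbin_even (p l : ℕ) (hl : Even l) : qbin ((l:ℤ) + 2*p) (4*p+1) = 0 := by
  unfold qbin
  rw [if_pos]
  right; right
  obtain ⟨m, hm⟩ := hl
  exact ⟨⟨m + p, by push_cast [hm]; ring⟩, ⟨2*p, by ring⟩⟩

lemma qbin_odd (p m : ℕ) :
    qbin (((2*m+1 : ℕ) : ℤ) + 2*p) (4*p+1) = (Nat.choose (m+p) (2*p) : ℚ) := by
  unfold qbin
  rcases lt_or_ge m p with h | h
  · rw [if_pos (by right; left; push_cast; omega)]
    rw [Nat.choose_eq_zero_of_lt (by omega)]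
    simp
  · rw [if_neg]
    · have h1 : ((2*m+1 : ℕ) : ℤ) + 2*p = 2*(m+p)+1 := by push_cast; ring
      have h2 : ((2*(m+p)+1 : ℤ)).fdiv 2 = (m+p : ℤ) := by
        rw [Int.fdiv_eq_ediv_of_nonneg _ (by norm_num)]; omega
      have h3 : ((4*(p:ℤ)+1)).fdiv 2 = (2*p : ℤ) := by
        rw [Int.fdiv_eq_ediv_of_nonneg _ (by norm_num)]; omega
      rw [h1, h2, h3]
      have h4 : ((m:ℤ) + p).toNat = m + p := by omega
      have h5 : ((2*p : ℤ)).toNat = 2*p := by omega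
      rw [h4, h5]
    · push_neg
      refine ⟨by positivity, by push_cast; omega, ?_⟩
      intro he
      exfalso
      rcases he with ⟨k, hk⟩
      omega

lemma hockeyQ (p : ℕ) : ∀ m : ℕ,
    ∑ s ∈ Finset.range m, (Nat.choose (s+p) (2*p) : ℚ)
      = (Nat.choose (m+p) (2*p+1) : ℚ) := by
  intro m
  induction m with
  | zero => simp [Nat.choose_eq_zero_of_lt (by omega : p < 2*p+1)]
  | succ n ih =>
      rw [Finset.sum_range_succ, ih]
      have : n + 1 + p = (n + p) + 1 := by omega
      rw [this, Nat.choose_succ_succ (n+p) (2*p)]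
      push_cast
      ring

lemma chooseRel (p N : ℕ) :
    ((2*p+1 : ℕ) : ℚ) * (Nat.choose (N+p) (2*p+1) : ℚ)
      = ((N:ℚ) - (p:ℚ)) * (Nat.choose (N+p) (2*p) : ℚ) := by
  rcases le_or_gt p N with h | h
  · have h0 := Nat.choose_succ_right_eq (N+p) (2*p)
    have hsub : N + p - 2*p = N - p := by omega
    rw [hsub] at h0
    have h1 := congrArg (fun x : ℕ => (x : ℚ)) h0
    push_cast [h] at h1
    push_cast
    linarith [h1]
  · rw [Nat.choose_eq_zero_of_lt (by omega : N+p < 2*p+1),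
       Nat.choose_eq_zero_of_lt (by omega : N+p < 2*p)]
    simp

lemma SKey (p q : ℕ) : ∀ N : ℕ,
    ((p:ℚ)+(q:ℚ)+1) * ∑ t ∈ Finset.range N, (Nat.choose (t+q) (2*q) : ℚ) *
        ((Nat.choose (t+p) (2*p+1) : ℚ) + (Nat.choose (t+p+1) (2*p+1) : ℚ))
      = (2*(q:ℚ)+1) * (Nat.choose (N+p) (2*p+1) : ℚ) * (Nat.choose (N+q) (2*q+1) : ℚ) := by
  intro N
  induction N with
  | zero => simp [Nat.choose_eq_zero_of_lt (by omega : p < 2*p+1)]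
  | succ n ih =>
      rw [Finset.sum_range_succ]
      have hp : (Nat.choose (n+1+p) (2*p+1) : ℚ)
          = (Nat.choose (n+p) (2*p) : ℚ) + (Nat.choose (n+p) (2*p+1) : ℚ) := by
        have : n + 1 + p = (n + p) + 1 := by omega
        rw [this, Nat.choose_succ_succ (n+p) (2*p)]
        push_cast; ring
      have hq : (Nat.choose (n+1+q) (2*q+1) : ℚ)
          = (Nat.choose (n+q) (2*q) : ℚ) + (Nat.choose (n+q) (2*q+1) : ℚ) := by
        have : n + 1 + q = (n + q) + 1 := by omega
        rw [this, Nat.choose_succ_succ (n+q) (2*q)]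
        push_cast; ring
      have hpn : n + p + 1 = n + 1 + p := by omega
      rw [hpn, hp, hq]
      have r1 := chooseRel p n
      have r2 := chooseRel q n
      push_cast at r1 r2 ⊢
      nlinarith [ih, r1, r2]

lemma sum_range_even_odd (g : ℕ → ℚ) : ∀ N : ℕ,
    ∑ l ∈ Finset.range (2*N), g l = ∑ u ∈ Finset.range N, (g (2*u) + g (2*u+1)) := by
  intro N
  induction N with
  | zero => simp
  | succ n ih =>
      have h : 2*(n+1) = (2*n + 1) + 1 := by omega
      rw [h, Finset.sum_range_succ, Finset.sum_range_succ, ih, Finset.sum_range_succ]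
      ring

lemma sum_Icc_odd (g : ℕ → ℚ) (N : ℕ) (hN : 1 ≤ N) (h0 : ∀ l, Even l → g l = 0) :
    ∑ l ∈ Finset.Icc 1 (2*N - 1), g l = ∑ u ∈ Finset.range N, g (2*u+1) := by
  have h1 : Finset.Icc 1 (2*N-1) = Finset.Ico 1 (2*N) := by
    rw [← Finset.Ico_add_one_right_eq_Icc]
    congr 1
    omega
  rw [h1, Finset.sum_Ico_eq_sum_range]
  have h3 : ∑ i ∈ Finset.range (2*N), g (1 + i)
      = ∑ i ∈ Finset.range (2*N - 1), g (1 + i) + g (1 + (2*N-1)) := by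
    have h4 : 2*N = (2*N-1) + 1 := by omega
    rw [h4, Finset.sum_range_succ]
    norm_num
  have h5 : g (1 + (2*N-1)) = 0 := h0 _ ⟨N, by omega⟩
  have h6 := sum_range_even_odd (fun i => g (1 + i)) N
  have h7 : ∀ u, g (1 + 2*u) + g (1 + (2*u+1)) = g (2*u+1) := by
    intro u
    have e1 : g (1 + (2*u+1)) = 0 := h0 _ ⟨u+1, by omega⟩
    rw [e1]
    have e2 : 1 + 2*u = 2*u+1 := by omega
    rw [e2, add_zero]
  have key : ∑ i ∈ Finset.range (2*N - 1), g (1 + i) = ∑ u ∈ Finset.range N, g (2*u+1) := by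
    have h3' := h3
    rw [h5, add_zero] at h3'
    rw [← h3', h6]
    exact Finset.sum_congr rfl fun u _ => h7 u
  have h2 : 2*N - 1 = 2*N - 1 := rfl
  calc ∑ i ∈ Finset.range (2*N - 1), g (1 + i) = ∑ u ∈ Finset.range N, g (2*u+1) := key

lemma sign_two_mul (x : ℤ) : Int.sign (2*x) = Int.sign x := by
  rcases lt_trichotomy x 0 with h | h | h
  · rw [Int.sign_eq_neg_one_of_neg h, Int.sign_eq_neg_one_of_neg (by omega)]
  · simp [h]
  · rw [Int.sign_eq_one_of_pos h, Int.sign_eq_one_of_pos (by omega)]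

lemma signSumQ (A : ℕ → ℚ) (N t : ℕ) (ht : t < N) :
    ∑ s ∈ Finset.range N, A s * ((Int.sign ((t:ℤ) - (s:ℤ)) : ℤ) : ℚ)
      = 2 * (∑ s ∈ Finset.range t, A s) + A t - ∑ s ∈ Finset.range N, A s := by
  have key : ∑ s ∈ Finset.range N, A s * (((Int.sign ((t:ℤ) - (s:ℤ)) : ℤ) : ℚ) + 1)
      = 2 * (∑ s ∈ Finset.range t, A s) + A t := by
    have hsub : Finset.range (t+1) ⊆ Finset.range N := Finset.range_subset_range.2 (by omega)
    rw [← Finset.sum_subset hsub]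
    · rw [Finset.sum_range_succ]
      have h1 : ∀ s ∈ Finset.range t,
          A s * (((Int.sign ((t:ℤ) - (s:ℤ)) : ℤ) : ℚ) + 1) = 2 * A s := by
        intro s hs
        simp only [Finset.mem_range] at hs
        rw [Int.sign_eq_one_of_pos (by omega : (0:ℤ) < (t:ℤ) - (s:ℤ))]
        push_cast; ring
      rw [Finset.sum_congr rfl h1, sub_self, Int.sign_zero, Finset.mul_sum]
      push_cast; ring
    · intro s hs hs'
      simp only [Finset.mem_range] at hs hs'
      rw [Int.sign_eq_neg_one_of_neg (by omega : (t:ℤ) - (s:ℤ) < 0)]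
      push_cast; ring
  have expand : ∑ s ∈ Finset.range N, A s * (((Int.sign ((t:ℤ) - (s:ℤ)) : ℤ) : ℚ) + 1)
      = (∑ s ∈ Finset.range N, A s * ((Int.sign ((t:ℤ) - (s:ℤ)) : ℤ) : ℚ))
        + ∑ s ∈ Finset.range N, A s := by
    rw [← Finset.sum_add_distrib]
    exact Finset.sum_congr rfl fun s _ => by ring
  linarith [key, expand]

theorem stmt13 (α b : ℕ) (hα : 1 ≤ α) (hαo : Odd α) (hbe : Even b)
    (i j : ℕ) (hi : 1 ≤ i) (hi' : i ≤ (α + 1) / 2) (hj : 1 ≤ j) (hj' : j ≤ (α + 1) / 2) :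
    Mq α b (2 * i - 1) (2 * j - 1)
    = (Nat.choose ((α + b - 1) / 2 + j) (2 * j - 1) : ℚ) *
        (Nat.choose ((α + b - 1) / 2 + i) (2 * i - 1) : ℚ) *
        ((j : ℚ) - (i : ℚ)) / ((i : ℚ) + (j : ℚ) - 1) := by
  obtain ⟨p, rfl⟩ : ∃ p, i = p + 1 := ⟨i - 1, by omega⟩
  obtain ⟨q, rfl⟩ : ∃ q, j = q + 1 := ⟨j - 1, by omega⟩
  obtain ⟨m, hm⟩ := hαo
  obtain ⟨c, hc⟩ := hbe
  have hab : α + b = 2*(m+c+1) - 1 := by omega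
  set N := m + c + 1 with hNdef
  have hN : 1 ≤ N := by omega
  -- Step 1: rewrite Mq as a clean double sum over odd indices
  have hM : Mq α b (2*(p+1)-1) (2*(q+1)-1)
      = ∑ t ∈ Finset.range N, ∑ s ∈ Finset.range N,
          (Nat.choose (t+q) (2*q) : ℚ) *
            ((Nat.choose (s+p) (2*p) : ℚ) * ((Int.sign ((t:ℤ) - (s:ℤ)) : ℤ) : ℚ)) := by
    unfold Mq
    rw [hab]
    rw [sum_Icc_odd _ N hN]
    · apply Finset.sum_congr rfl
      intro t _
      rw [sum_Icc_odd _ N hN]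
      · apply Finset.sum_congr rfl
        intro s _
        have hA : ((2*s+1 : ℕ) : ℤ) + ((2*(p+1)-1 : ℕ) : ℤ) - 1
            = ((2*s+1 : ℕ) : ℤ) + 2*(p:ℤ) := by
          have : (2*(p+1)-1 : ℕ) = 2*p+1 := by omega
          rw [this]; push_cast; ring
        have hB : 2 * ((2*(p+1)-1 : ℕ) : ℤ) - 1 = 4*(p:ℤ)+1 := by
          have : (2*(p+1)-1 : ℕ) = 2*p+1 := by omega
          rw [this]; push_cast; ring
        have hC : ((2*t+1 : ℕ) : ℤ) + ((2*(q+1)-1 : ℕ) : ℤ) - 1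
            = ((2*t+1 : ℕ) : ℤ) + 2*(q:ℤ) := by
          have : (2*(q+1)-1 : ℕ) = 2*q+1 := by omega
          rw [this]; push_cast; ring
        have hD : 2 * ((2*(q+1)-1 : ℕ) : ℤ) - 1 = 4*(q:ℤ)+1 := by
          have : (2*(q+1)-1 : ℕ) = 2*q+1 := by omega
          rw [this]; push_cast; ring
        rw [hA, hB, hC, hD, qbin_odd p s, qbin_odd q t]
        have hsgn : Int.sign (((2*t+1 : ℕ) : ℤ) - ((2*s+1 : ℕ) : ℤ))
            = Int.sign ((t:ℤ) - (s:ℤ)) := by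
          have harg : ((2*t+1 : ℕ) : ℤ) - ((2*s+1 : ℕ) : ℤ) = 2*((t:ℤ) - (s:ℤ)) := by
            push_cast; ring
          rw [harg, sign_two_mul]
        rw [hsgn]
        have hpow1 : (-1 : ℚ) ^ (2*s+1) = -1 := Odd.neg_one_pow ⟨s, by omega⟩
        have hpow2 : (-1 : ℚ) ^ (2*t+1) = -1 := Odd.neg_one_pow ⟨t, by omega⟩
        rw [hpow1, hpow2]
        ring
      · -- inner even-l vanishing
        intro l hl
        have hB : 2 * ((2*(p+1)-1 : ℕ) : ℤ) - 1 = 4*(p:ℤ)+1 := by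
          have : (2*(p+1)-1 : ℕ) = 2*p+1 := by omega
          rw [this]; push_cast; ring
        have hA : ((l : ℕ) : ℤ) + ((2*(p+1)-1 : ℕ) : ℤ) - 1 = ((l : ℕ) : ℤ) + 2*(p:ℤ) := by
          have : (2*(p+1)-1 : ℕ) = 2*p+1 := by omega
          rw [this]; push_cast; ring
        rw [hA, hB, qbin_even p l hl]
        ring
    · -- outer even-r vanishing
      intro r hr
      apply Finset.sum_eq_zero
      intro l _
      have hD : 2 * ((2*(q+1)-1 : ℕ) : ℤ) - 1 = 4*(q:ℤ)+1 := by
        have : (2*(q+1)-1 : ℕ) = 2*q+1 := by omega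
        rw [this]; push_cast; ring
      have hC : ((r : ℕ) : ℤ) + ((2*(q+1)-1 : ℕ) : ℤ) - 1 = ((r : ℕ) : ℤ) + 2*(q:ℤ) := by
        have : (2*(q+1)-1 : ℕ) = 2*q+1 := by omega
        rw [this]; push_cast; ring
      rw [hC, hD, qbin_even q r hr]
      ring
  -- Step 2: evaluate inner sums
  have hM2 : Mq α b (2*(p+1)-1) (2*(q+1)-1)
      = (∑ t ∈ Finset.range N, (Nat.choose (t+q) (2*q) : ℚ) *
          ((Nat.choose (t+p) (2*p+1) : ℚ) + (Nat.choose (t+p+1) (2*p+1) : ℚ)))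
        - (Nat.choose (N+p) (2*p+1) : ℚ) * (Nat.choose (N+q) (2*q+1) : ℚ) := by
    rw [hM]
    rw [← hockeyQ q N, Finset.mul_sum, ← Finset.sum_sub_distrib]
    apply Finset.sum_congr rfl
    intro t ht
    simp only [Finset.mem_range] at ht
    rw [← Finset.mul_sum, signSumQ _ N t ht, hockeyQ p t, hockeyQ p N]
    have pascal : (Nat.choose (t+p+1) (2*p+1) : ℚ)
        = (Nat.choose (t+p) (2*p) : ℚ) + (Nat.choose (t+p) (2*p+1) : ℚ) := by
      rw [Nat.choose_succ_succ (t+p) (2*p)]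
      push_cast; ring
    rw [pascal]
    ring
  -- Step 3: conclude
  have hS := SKey p q N
  have habdiv : (α + b - 1) / 2 + (q + 1) = N + q := by omega
  have habdiv2 : (α + b - 1) / 2 + (p + 1) = N + p := by omega
  have hch1 : 2 * (q + 1) - 1 = 2*q+1 := by omega
  have hch2 : 2 * (p + 1) - 1 = 2*p+1 := by omega
  rw [hM2, habdiv, habdiv2, hch1, hch2]
  have hne : ((p:ℚ) + 1 + ((q:ℚ) + 1) - 1) ≠ 0 := by
    have e : ((p:ℚ) + 1 + ((q:ℚ) + 1) - 1) = (p:ℚ) + (q:ℚ) + 1 := by ring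
    rw [e]; positivity
  push_cast
  rw [eq_div_iff hne]
  linear_combination hS
end
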